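/- arXiv:1903.03977 — 7 statements merged into one kernel-verified Lean document; each statement's English description precedes it below -/
import Mathlib

section
/- Let H₊, H₋ be complex Hilbert spaces and H = H₊ × H₋ their Hilbert direct sum. Let S₊, S₋ be self-adjoint operators in H₊, H₋, let M be a densely defined operator from H₋ to H₊ with adjoint M*, with dom S₋ ⊆ dom M, dom S₊ ⊆ dom M*, and suppose there are constants a₋, a₊ ≥ 0 and 0 ≤ b₋, b₊ < 1 such that ‖M f₋‖² ≤ a₋‖f₋‖² + b₋‖S₋ f₋‖² for all f₋ ∈ dom S₋ and ‖M* f₊‖² ≤ a₊‖f₊‖² + b₊‖S₊ f₊‖² for all f₊ ∈ dom S₊. Define S on dom S = dom S₊ × dom S₋ by S(f₊, f₋) = (S₊ f₊ + M f₋, −M* f₊ + S₋ f₋), and let J be the bounded operator J(f₊, f₋) = (f₊, −f₋). Then the operator J∘S, with domain dom S, is self-adjoint in H. -/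
noncomputable section

open Filter Topology

/-- `R` is the (bounded, everywhere defined) resolvent of the possibly unbounded
operator `S` at the point `lam`: the range of `R` lies in the domain of `S`,
`(S - lam) ∘ R = id` on the whole space and `R ∘ (S - lam) = id` on the domain of `S`. -/
def ResolventAt {H : Type*} [NormedAddCommGroup H] [InnerProductSpace ℂ H]
    (S : H →ₗ.[ℂ] H) (lam : ℂ) (R : H →L[ℂ] H) : Prop :=
  (∀ f : H, ∃ h : R f ∈ S.domain, S ⟨R f, h⟩ - lam • R f = f) ∧
  ∀ g : S.domain, R (S g - lam • (g : H)) = g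

/-- `lam` belongs to the resolvent set of `S`. -/
def InResolventSet {H : Type*} [NormedAddCommGroup H] [InnerProductSpace ℂ H]
    (S : H →ₗ.[ℂ] H) (lam : ℂ) : Prop :=
  ∃ R : H →L[ℂ] H, ResolventAt S lam R

/-- The spectrum of a possibly unbounded operator. -/
def Spec {H : Type*} [NormedAddCommGroup H] [InnerProductSpace ℂ H]
    (S : H →ₗ.[ℂ] H) : Set ℂ :=
  {lam | ¬ InResolventSet S lam}

/-!
`J ∘ S` is the operator matrix `[[S₊, M], [M*, -S₋]]`, a symmetric perturbation `A + V` of the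
self-adjoint diagonal `A = diag(S₊, -S₋)` with `‖V f‖² ≤ a ‖f‖² + b ‖A f‖²`, where
`a = max a₊ a₋` and `b = max b₊ b₋ < 1`. This is the Kato–Rellich situation: since
`‖(A + iμ) f‖² = ‖A f‖² + μ² ‖f‖²`, the operator `V (A + iμ)⁻¹` has norm at most
`√(a / μ² + b) < 1` for large `|μ|`, so `A + V + iμ = (1 + V (A + iμ)⁻¹) (A + iμ)` is onto by a
Neumann series. A densely defined symmetric operator `T` with `T ± iμ` onto is self-adjoint.
-/

open Complex ComplexConjugate

theorem LinearMap.surjective_id_add_of_norm_le {𝕜 E : Type*} [NontriviallyNormedField 𝕜]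
    [NormedAddCommGroup E] [NormedSpace 𝕜 E] [CompleteSpace E] (L : E →ₗ[𝕜] E) {k : ℝ}
    (hk : k < 1) (hL : ∀ x, ‖L x‖ ≤ k * ‖x‖) :
    Function.Surjective (LinearMap.id + L : E →ₗ[𝕜] E) := by
  have hnorm : ‖-L.mkContinuous k hL‖ < 1 := by
    rw [norm_neg]
    exact (L.mkContinuous_norm_le' hL).trans_lt (max_lt hk one_pos)
  let u := Units.oneSub _ hnorm
  intro g
  refine ⟨(↑u⁻¹ : E →L[𝕜] E) g, ?_⟩
  simpa [u] using congrArg (fun f : E →L[𝕜] E ↦ f g) u.mul_inv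

namespace LinearPMap

section Algebra

variable {R E F : Type*} [CommRing R] [AddCommGroup E] [Module R E] [AddCommGroup F] [Module R F]

def shift (T : E →ₗ.[R] E) (c : R) : T.domain →ₗ[R] E :=
  T.toFun + c • T.domain.subtype

@[simp]
theorem shift_apply (T : E →ₗ.[R] E) (c : R) (x : T.domain) : T.shift c x = T x + c • (x : E) :=
  rfl

def fromBlocks (A : E →ₗ.[R] E) (B : F →ₗ.[R] E) (C : E →ₗ.[R] F) (D : F →ₗ.[R] F)
    (hB : D.domain ≤ B.domain) (hC : A.domain ≤ C.domain) :
    WithLp 2 (E × F) →ₗ.[R] WithLp 2 (E × F) where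
  domain := (A.domain.prod D.domain).comap (WithLp.linearEquiv 2 R (E × F)).toLinearMap
  toFun :=
    { toFun := fun x ↦ WithLp.toLp 2
        (A ⟨x.1.ofLp.1, x.2.1⟩ + B ⟨x.1.ofLp.2, hB x.2.2⟩,
          C ⟨x.1.ofLp.1, hC x.2.1⟩ + D ⟨x.1.ofLp.2, x.2.2⟩)
      map_add' := fun x y ↦ by
        simp only [← WithLp.toLp_add, Prod.mk_add_mk]
        congr 2
        · rw [add_add_add_comm, ← map_add, ← map_add]; rfl
        · rw [add_add_add_comm, ← map_add, ← map_add]; rfl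
      map_smul' := fun r x ↦ by
        simp only [← WithLp.toLp_smul, Prod.smul_mk, smul_add, RingHom.id_apply]
        congr 2
        · rw [← map_smul, ← map_smul]; rfl
        · rw [← map_smul, ← map_smul]; rfl }

variable {A : E →ₗ.[R] E} {B : F →ₗ.[R] E} {C : E →ₗ.[R] F} {D : F →ₗ.[R] F}
  {hB : D.domain ≤ B.domain} {hC : A.domain ≤ C.domain}

theorem mem_domain_fromBlocks {x : WithLp 2 (E × F)} :
    x ∈ (fromBlocks A B C D hB hC).domain ↔ x.ofLp.1 ∈ A.domain ∧ x.ofLp.2 ∈ D.domain :=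
  Iff.rfl

theorem fromBlocks_apply (x : (fromBlocks A B C D hB hC).domain) :
    fromBlocks A B C D hB hC x = WithLp.toLp 2
      (A ⟨(x : WithLp 2 (E × F)).ofLp.1, x.2.1⟩ + B ⟨(x : WithLp 2 (E × F)).ofLp.2, hB x.2.2⟩,
        C ⟨(x : WithLp 2 (E × F)).ofLp.1, hC x.2.1⟩ + D ⟨(x : WithLp 2 (E × F)).ofLp.2, x.2.2⟩) :=
  rfl

end Algebra

variable {E F : Type*} [NormedAddCommGroup E] [InnerProductSpace ℂ E]
  [NormedAddCommGroup F] [InnerProductSpace ℂ F]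

local notation "⟪" x ", " y "⟫" => @inner ℂ _ _ x y

theorem IsFormalAdjoint.im_inner_apply_self {T : E →ₗ.[ℂ] E} (hT : T.IsFormalAdjoint T)
    (x : T.domain) : (⟪T x, (x : E)⟫).im = 0 :=
  conj_eq_iff_im.mp <| by rw [inner_conj_symm, hT x x]

theorem IsFormalAdjoint.norm_shift_sq {T : E →ₗ.[ℂ] E} (hT : T.IsFormalAdjoint T) (μ : ℝ)
    (x : T.domain) : ‖T.shift (μ * I) x‖ ^ 2 = ‖T x‖ ^ 2 + μ ^ 2 * ‖(x : E)‖ ^ 2 := by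
  rw [shift_apply, @norm_add_sq ℂ, inner_smul_right, norm_smul]
  simp [hT.im_inner_apply_self, mul_pow]

theorem IsFormalAdjoint.abs_mul_norm_le_norm_shift {T : E →ₗ.[ℂ] E} (hT : T.IsFormalAdjoint T)
    (μ : ℝ) (x : T.domain) : |μ| * ‖(x : E)‖ ≤ ‖T.shift (μ * I) x‖ := by
  refine le_of_pow_le_pow_left₀ two_ne_zero (norm_nonneg _) ?_
  rw [hT.norm_shift_sq, mul_pow, sq_abs]
  nlinarith [sq_nonneg ‖T x‖]

theorem IsFormalAdjoint.norm_le_norm_shift {T : E →ₗ.[ℂ] E} (hT : T.IsFormalAdjoint T)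
    (μ : ℝ) (x : T.domain) : ‖T x‖ ≤ ‖T.shift (μ * I) x‖ := by
  refine le_of_pow_le_pow_left₀ two_ne_zero (norm_nonneg _) ?_
  rw [hT.norm_shift_sq]
  nlinarith [sq_nonneg μ, sq_nonneg ‖(x : E)‖]

theorem IsFormalAdjoint.injective_shift {T : E →ₗ.[ℂ] E} (hT : T.IsFormalAdjoint T) {μ : ℝ}
    (hμ : μ ≠ 0) : Function.Injective (T.shift (μ * I)) := by
  rw [← LinearMap.ker_eq_bot, LinearMap.ker_eq_bot']
  intro x hx
  have h := hT.abs_mul_norm_le_norm_shift μ x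
  rw [hx, norm_zero] at h
  have : ‖(x : E)‖ = 0 :=
    le_antisymm (nonpos_of_mul_nonpos_right h (abs_pos.mpr hμ)) (norm_nonneg _)
  simpa using this

theorem IsFormalAdjoint.fromBlocks {A : E →ₗ.[ℂ] E} {B : F →ₗ.[ℂ] E} {C : E →ₗ.[ℂ] F}
    {D : F →ₗ.[ℂ] F} {hB : D.domain ≤ B.domain} {hC : A.domain ≤ C.domain}
    (hA : A.IsFormalAdjoint A) (hD : D.IsFormalAdjoint D) (hBC : C.IsFormalAdjoint B) :
    (fromBlocks A B C D hB hC).IsFormalAdjoint (fromBlocks A B C D hB hC) := by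
  intro x y
  obtain ⟨hx₁, hx₂⟩ := mem_domain_fromBlocks.mp x.2
  obtain ⟨hy₁, hy₂⟩ := mem_domain_fromBlocks.mp y.2
  have h₁ := hA ⟨_, hx₁⟩ ⟨_, hy₁⟩
  have h₂ := hD ⟨_, hx₂⟩ ⟨_, hy₂⟩
  have h₃ := hBC ⟨_, hC hx₁⟩ ⟨_, hB hy₂⟩
  have h₄ := hBC.symm ⟨_, hB hx₂⟩ ⟨_, hC hy₁⟩
  simp only [fromBlocks_apply, WithLp.prod_inner_apply, inner_add_left, inner_add_right]
  linear_combination h₁ + h₂ + h₃ + h₄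

variable [CompleteSpace E] [CompleteSpace F]

theorem IsFormalAdjoint.isClosed_range_shift {T : E →ₗ.[ℂ] E} (hT : T.IsFormalAdjoint T)
    (hc : T.IsClosed) {μ : ℝ} (hμ : μ ≠ 0) : _root_.IsClosed (Set.range (T.shift (μ * I))) := by
  -- `ran (T + iμ)` is the image of the complete space `graph T` under `(x, y) ↦ y + iμ x`,
  -- which is bounded below there.
  have : CompleteSpace T.graph := hc.completeSpace_coe
  let φ : T.graph →L[ℂ] E :=
    (ContinuousLinearMap.snd ℂ E E + (μ * I : ℂ) • ContinuousLinearMap.fst ℂ E E).comp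
      T.graph.subtypeL
  have hrange : Set.range φ = Set.range (T.shift (μ * I)) := by
    ext y
    constructor
    · rintro ⟨⟨p, hp⟩, rfl⟩
      obtain ⟨x, hx₁, hx₂⟩ := T.mem_graph_iff.mp hp
      exact ⟨x, by simp [φ, hx₁, hx₂]⟩
    · rintro ⟨x, rfl⟩
      exact ⟨⟨_, T.mem_graph x⟩, by simp [φ]⟩
  have hbound : ∀ p : T.graph, ‖p‖ ≤ max 1 ‖μ‖₊⁻¹ * ‖φ p‖ := by
    rintro ⟨⟨p₁, p₂⟩, hp⟩
    obtain ⟨x, rfl, rfl⟩ := T.mem_graph_iff.mp hp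
    have hφ : φ ⟨_, hp⟩ = T.shift (μ * I) x := by simp [φ]
    have hx : ‖(x : E)‖ ≤ max 1 ‖μ‖₊⁻¹ * ‖T.shift (μ * I) x‖ :=
      calc ‖(x : E)‖ ≤ |μ|⁻¹ * ‖T.shift (μ * I) x‖ := by
            rw [inv_mul_eq_div, le_div_iff₀' (abs_pos.mpr hμ)]
            exact hT.abs_mul_norm_le_norm_shift μ x
        _ ≤ _ := by gcongr; simp
    have hTx : ‖T x‖ ≤ max 1 ‖μ‖₊⁻¹ * ‖T.shift (μ * I) x‖ :=
      (hT.norm_le_norm_shift μ x).trans (le_mul_of_one_le_left (norm_nonneg _) (by simp))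
    rw [hφ, Submodule.coe_norm, Prod.norm_def]
    exact max_le hx hTx
  rw [← hrange]
  exact (φ.antilipschitz_of_bound hbound).isClosed_range φ.uniformContinuous

theorem _root_.IsSelfAdjoint.isFormalAdjoint {S : E →ₗ.[ℂ] E} (hS : IsSelfAdjoint S) :
    S.IsFormalAdjoint S := by
  simpa only [isSelfAdjoint_def.mp hS] using adjoint_isFormalAdjoint hS.dense_domain

theorem _root_.IsSelfAdjoint.orthogonal_range_shift {S : E →ₗ.[ℂ] E} (hS : IsSelfAdjoint S)
    {μ : ℝ} (hμ : μ ≠ 0) : (LinearMap.range (S.shift (μ * I)))ᗮ = ⊥ := by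
  -- `v ⊥ ran (S + iμ)` means `S† v = iμ v`, but `⟪v, S v⟫` is real.
  rw [Submodule.eq_bot_iff]
  intro v hv
  have hv' : ∀ x : S.domain, ⟪(μ * I : ℂ) • v, (x : E)⟫ = ⟪v, S x⟫ := by
    intro x
    have h := (Submodule.mem_orthogonal' _ _).mp hv _ (LinearMap.mem_range_self _ x)
    rw [shift_apply, inner_add_right, inner_smul_right] at h
    rw [inner_smul_left]
    simp only [map_mul, conj_ofReal, conj_I]
    linear_combination -h
  have hdom : v ∈ S†.domain := mem_adjoint_domain_of_exists _ ⟨_, hv'⟩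
  rw [isSelfAdjoint_def.mp hS] at hdom
  have h : (⟪v, S ⟨v, hdom⟩⟫).im = 0 := by
    rw [← inner_conj_symm, conj_im, hS.isFormalAdjoint.im_inner_apply_self, neg_zero]
  rw [← hv', inner_smul_left, inner_self_eq_norm_sq_to_K] at h
  have : μ * ‖v‖ ^ 2 = 0 := by simpa [← ofReal_pow] using h
  simpa [hμ] using this

theorem _root_.IsSelfAdjoint.surjective_shift {S : E →ₗ.[ℂ] E} (hS : IsSelfAdjoint S) {μ : ℝ}
    (hμ : μ ≠ 0) : Function.Surjective (S.shift (μ * I)) := by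
  have hclosed := hS.isFormalAdjoint.isClosed_range_shift hS.isClosed hμ
  rw [← LinearMap.coe_range] at hclosed
  rw [← LinearMap.range_eq_top, ← hclosed.submodule_topologicalClosure_eq,
    Submodule.topologicalClosure_eq_top_iff]
  exact hS.orthogonal_range_shift hμ

theorem isSelfAdjoint_of_surjective_shift {T : E →ₗ.[ℂ] E} (hd : Dense (T.domain : Set E))
    (hT : T.IsFormalAdjoint T) {μ : ℝ} (hsurj : Function.Surjective (T.shift (μ * I)))
    (hsurj_neg : Function.Surjective (T.shift ((-μ : ℝ) * I))) : IsSelfAdjoint T := by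
  have hconj : conj (μ * I : ℂ) = ((-μ : ℝ) : ℂ) * I := by simp
  rw [← hconj] at hsurj_neg
  have hle : T ≤ T† := hT.le_adjoint hd
  -- For `y ∈ dom T†` solve `(T - iμ) x = (T† - iμ) y`; then `y - x ⊥ ran (T + iμ) = E`.
  have hdom : ∀ y : T†.domain, (y : E) ∈ T.domain := by
    intro y
    obtain ⟨x, hx⟩ := hsurj_neg (T† y + conj (μ * I : ℂ) • (y : E))
    have hu : ∀ w : T.domain, ⟪(y : E) - x, T.shift (μ * I) w⟫ = 0 := by
      intro w
      have h₁ : ⟪(y : E), T w⟫ = ⟪T† y, (w : E)⟫ := (adjoint_isFormalAdjoint hd y w).symm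
      have h₂ : ⟪(x : E), T w⟫ = ⟪T x, (w : E)⟫ := (hT x w).symm
      rw [shift_apply] at hx ⊢
      rw [inner_add_right, inner_smul_right, inner_sub_left, inner_sub_left, h₁, h₂]
      have : T† y - T x = conj (μ * I : ℂ) • ((x : E) - y) := by
        linear_combination (norm := module) -hx
      rw [← inner_sub_left, this, inner_smul_left, conj_conj, inner_sub_left]
      ring
    obtain ⟨w, hw⟩ := hsurj ((y : E) - x)
    have : (y : E) - x = 0 := inner_self_eq_zero.mp (hw ▸ hu w)
    rw [sub_eq_zero.mp this]
    exact x.2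
  exact isSelfAdjoint_def.mpr <|
    le_antisymm (show T† ≤ T from ⟨fun y hy ↦ hdom ⟨y, hy⟩, fun _ _ h ↦ (hle.2 h.symm).symm⟩) hle

theorem surjective_shift_of_relBound {A T : E →ₗ.[ℂ] E} (hA : IsSelfAdjoint A)
    (hdom : T.domain = A.domain) {a b : ℝ} (ha : 0 ≤ a) (hb : 0 ≤ b)
    (hbound : ∀ x : A.domain,
      ‖T (Submodule.inclusion hdom.ge x) - A x‖ ^ 2 ≤ a * ‖(x : E)‖ ^ 2 + b * ‖A x‖ ^ 2)
    {μ : ℝ} (hμ : μ ≠ 0) (hab : a / μ ^ 2 + b < 1) : Function.Surjective (T.shift (μ * I)) := by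
  let R := (LinearEquiv.ofBijective (A.shift (μ * I))
    ⟨hA.isFormalAdjoint.injective_shift hμ, hA.surjective_shift hμ⟩).symm
  have hR : ∀ h, A.shift (μ * I) (R h) = h := LinearEquiv.apply_ofBijective_symm_apply _
  let L : E →ₗ[ℂ] E := (T.toFun ∘ₗ Submodule.inclusion hdom.ge - A.toFun) ∘ₗ R.toLinearMap
  have hL : ∀ h, ‖L h‖ ≤ √(a / μ ^ 2 + b) * ‖h‖ := by
    intro h
    have hnorm := hA.isFormalAdjoint.norm_shift_sq μ (R h)
    rw [hR] at hnorm
    have h₁ : ‖(R h : E)‖ ^ 2 ≤ ‖h‖ ^ 2 / μ ^ 2 := by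
      rw [le_div_iff₀ (by positivity)]; nlinarith [sq_nonneg ‖A (R h)‖]
    have h₂ : ‖A (R h)‖ ^ 2 ≤ ‖h‖ ^ 2 := by nlinarith [sq_nonneg ‖(R h : E)‖, sq_nonneg μ]
    refine le_of_pow_le_pow_left₀ two_ne_zero (by positivity) ?_
    rw [mul_pow, Real.sq_sqrt (by positivity)]
    calc ‖L h‖ ^ 2 ≤ a * ‖(R h : E)‖ ^ 2 + b * ‖A (R h)‖ ^ 2 := hbound (R h)
      _ ≤ a * (‖h‖ ^ 2 / μ ^ 2) + b * ‖h‖ ^ 2 := by gcongr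
      _ = (a / μ ^ 2 + b) * ‖h‖ ^ 2 := by ring
  intro g
  obtain ⟨h, hh⟩ := L.surjective_id_add_of_norm_le
    ((Real.sqrt_lt' one_pos).mpr (by simpa using hab)) hL g
  refine ⟨Submodule.inclusion hdom.ge (R h), ?_⟩
  calc T.shift (μ * I) (Submodule.inclusion hdom.ge (R h)) = A.shift (μ * I) (R h) + L h := by
        simp only [shift_apply, L, LinearMap.comp_apply, LinearMap.sub_apply, toFun_eq_coe,
          LinearEquiv.coe_coe, Submodule.coe_inclusion]
        abel
    _ = g := by rw [hR, ← hh]; rfl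

theorem isSelfAdjoint_of_relBound_lt_one {A T : E →ₗ.[ℂ] E} (hA : IsSelfAdjoint A)
    (hT : T.IsFormalAdjoint T) (hdom : T.domain = A.domain) {a b : ℝ} (hb : b < 1)
    (hbound : ∀ x : A.domain,
      ‖T (Submodule.inclusion hdom.ge x) - A x‖ ^ 2 ≤ a * ‖(x : E)‖ ^ 2 + b * ‖A x‖ ^ 2) :
    IsSelfAdjoint T := by
  have hbound' : ∀ x : A.domain, ‖T (Submodule.inclusion hdom.ge x) - A x‖ ^ 2 ≤
      max a 0 * ‖(x : E)‖ ^ 2 + max b 0 * ‖A x‖ ^ 2 := fun x ↦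
    (hbound x).trans (by gcongr <;> exact le_max_left _ _)
  have hlim : Tendsto (fun μ : ℝ ↦ max a 0 / μ ^ 2 + max b 0) atTop (𝓝 (0 + max b 0)) :=
    (tendsto_const_nhds.div_atTop (tendsto_pow_atTop two_ne_zero)).add_const _
  obtain ⟨μ, hμ, hab⟩ := ((eventually_gt_atTop 0).and
    (hlim.eventually (gt_mem_nhds (show 0 + max b 0 < 1 by simpa using hb)))).exists
  have hsurj := fun s hs ↦
    surjective_shift_of_relBound hA hdom (le_max_right a 0) (le_max_right b 0) hbound' (μ := s) hs
  exact isSelfAdjoint_of_surjective_shift (hdom ▸ hA.dense_domain) hT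
    (hsurj μ hμ.ne' hab) (hsurj (-μ) (neg_ne_zero.mpr hμ.ne') (by rwa [neg_sq]))

theorem isSelfAdjoint_neg {S : E →ₗ.[ℂ] E} (hS : IsSelfAdjoint S) : IsSelfAdjoint (-S) := by
  have hsymm : (-S).IsFormalAdjoint (-S) := fun x y ↦ by
    simp only [neg_apply, inner_neg_left, inner_neg_right, hS.isFormalAdjoint x y]
  have hsurj : ∀ μ : ℝ, μ ≠ 0 → Function.Surjective ((-S).shift (μ * I)) := by
    intro μ hμ g
    obtain ⟨x, hx⟩ := hS.surjective_shift (neg_ne_zero.mpr hμ) (-g)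
    refine ⟨x, ?_⟩
    simp only [shift_apply, neg_apply] at hx ⊢
    push_cast at hx
    linear_combination (norm := module) -hx
  exact isSelfAdjoint_of_surjective_shift hS.dense_domain hsymm (hsurj 1 one_ne_zero)
    (hsurj (-1) (by norm_num))

theorem isSelfAdjoint_fromBlocks_zero {A : E →ₗ.[ℂ] E} {D : F →ₗ.[ℂ] F} (hA : IsSelfAdjoint A)
    (hD : IsSelfAdjoint D) : IsSelfAdjoint (fromBlocks A 0 0 D le_top le_top) := by
  have hdense : Dense ((fromBlocks A 0 0 D le_top le_top).domain : Set (WithLp 2 (E × F))) :=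
    (hA.dense_domain.prod hD.dense_domain).preimage
      (WithLp.prodContinuousLinearEquiv 2 ℂ E F).toHomeomorph.isOpenMap
  have hsurj : ∀ μ : ℝ, μ ≠ 0 →
      Function.Surjective ((fromBlocks A 0 0 D le_top le_top).shift (μ * I)) := by
    intro μ hμ g
    obtain ⟨x, hx⟩ := hA.surjective_shift hμ g.ofLp.1
    obtain ⟨y, hy⟩ := hD.surjective_shift hμ g.ofLp.2
    refine ⟨⟨WithLp.toLp 2 ((x : E), (y : F)), x.2, y.2⟩, ?_⟩
    refine WithLp.ofLp_injective 2 (Prod.ext ?_ ?_)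
    · simpa [fromBlocks_apply] using hx
    · simpa [fromBlocks_apply] using hy
  have hzero : (0 : E →ₗ.[ℂ] F).IsFormalAdjoint 0 := fun _ _ ↦ by simp [zero_apply]
  exact isSelfAdjoint_of_surjective_shift hdense
    (hA.isFormalAdjoint.fromBlocks hD.isFormalAdjoint hzero) (hsurj 1 one_ne_zero)
    (hsurj (-1) (by norm_num))

theorem isSelfAdjoint_fromBlocks {A : E →ₗ.[ℂ] E} {B : F →ₗ.[ℂ] E} {C : E →ₗ.[ℂ] F}
    {D : F →ₗ.[ℂ] F} {hB : D.domain ≤ B.domain} {hC : A.domain ≤ C.domain}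
    (hA : IsSelfAdjoint A) (hD : IsSelfAdjoint D) (hBC : C.IsFormalAdjoint B) {a₁ a₂ b₁ b₂ : ℝ}
    (hb₁ : b₁ < 1) (hb₂ : b₂ < 1)
    (hBbound : ∀ x : D.domain, ‖B ⟨x, hB x.2⟩‖ ^ 2 ≤ a₁ * ‖(x : F)‖ ^ 2 + b₁ * ‖D x‖ ^ 2)
    (hCbound : ∀ x : A.domain, ‖C ⟨x, hC x.2⟩‖ ^ 2 ≤ a₂ * ‖(x : E)‖ ^ 2 + b₂ * ‖A x‖ ^ 2) :
    IsSelfAdjoint (fromBlocks A B C D hB hC) := by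
  have hdom : (fromBlocks A B C D hB hC).domain = (fromBlocks A 0 0 D le_top le_top).domain := rfl
  refine isSelfAdjoint_of_relBound_lt_one (isSelfAdjoint_fromBlocks_zero hA hD)
    (hA.isFormalAdjoint.fromBlocks hD.isFormalAdjoint hBC) hdom (a := max a₁ a₂)
    (max_lt hb₁ hb₂) fun x ↦ ?_
  obtain ⟨hx₁, hx₂⟩ := mem_domain_fromBlocks.mp x.2
  have hdiff : fromBlocks A B C D hB hC (Submodule.inclusion hdom.ge x) -
      fromBlocks A 0 0 D le_top le_top x = WithLp.toLp 2 (B ⟨_, hB hx₂⟩, C ⟨_, hC hx₁⟩) := by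
    rw [fromBlocks_apply, fromBlocks_apply, ← WithLp.toLp_sub, Prod.mk_sub_mk]
    simp only [zero_apply, add_zero, zero_add]
    congr 1
    ext
    · exact add_sub_cancel_left _ _
    · exact add_sub_cancel_right _ _
  have hdiag : fromBlocks A 0 0 D le_top le_top x = WithLp.toLp 2 (A ⟨_, hx₁⟩, D ⟨_, hx₂⟩) := by
    rw [fromBlocks_apply]
    simp only [zero_apply, add_zero, zero_add]
  rw [hdiff, hdiag]
  simp only [WithLp.prod_norm_sq_eq_of_L2, WithLp.fst, WithLp.snd]
  have hB' := hBbound ⟨_, hx₂⟩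
  have hC' := hCbound ⟨_, hx₁⟩
  have ha₁ := mul_le_mul_of_nonneg_right (le_max_left a₁ a₂)
    (sq_nonneg ‖(x : WithLp 2 (E × F)).ofLp.2‖)
  have ha₂ := mul_le_mul_of_nonneg_right (le_max_right a₁ a₂)
    (sq_nonneg ‖(x : WithLp 2 (E × F)).ofLp.1‖)
  have hb₁' := mul_le_mul_of_nonneg_right (le_max_left b₁ b₂) (sq_nonneg ‖D ⟨_, hx₂⟩‖)
  have hb₂' := mul_le_mul_of_nonneg_right (le_max_right b₁ b₂) (sq_nonneg ‖A ⟨_, hx₁⟩‖)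
  linarith

end LinearPMap

variable {Hp Hm : Type*}
  [NormedAddCommGroup Hp] [InnerProductSpace ℂ Hp] [CompleteSpace Hp]
  [NormedAddCommGroup Hm] [InnerProductSpace ℂ Hm] [CompleteSpace Hm]

theorem stmt0_general
    (Sp : Hp →ₗ.[ℂ] Hp) (Sm : Hm →ₗ.[ℂ] Hm)
    (hSp : IsSelfAdjoint Sp) (hSm : IsSelfAdjoint Sm)
    (M : Hm →ₗ.[ℂ] Hp) (hMdense : Dense (M.domain : Set Hm))
    (hdm : Sm.domain ≤ M.domain) (hdp : Sp.domain ≤ M.adjoint.domain)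
    (am ap bm bp : ℝ) (hbm1 : bm < 1) (hbp1 : bp < 1)
    (hMbound : ∀ f : Sm.domain,
      ‖M ⟨(f : Hm), hdm f.2⟩‖ ^ 2 ≤ am * ‖(f : Hm)‖ ^ 2 + bm * ‖Sm f‖ ^ 2)
    (hMadjBound : ∀ f : Sp.domain,
      ‖M.adjoint ⟨(f : Hp), hdp f.2⟩‖ ^ 2 ≤ ap * ‖(f : Hp)‖ ^ 2 + bp * ‖Sp f‖ ^ 2)
    (T : WithLp 2 (Hp × Hm) →ₗ.[ℂ] WithLp 2 (Hp × Hm))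
    (hTdom : ∀ p : WithLp 2 (Hp × Hm),
      p ∈ T.domain ↔ p.ofLp.1 ∈ Sp.domain ∧ p.ofLp.2 ∈ Sm.domain)
    (hTval : ∀ (p : T.domain) (h1 : (p : WithLp 2 (Hp × Hm)).ofLp.1 ∈ Sp.domain)
        (h2 : (p : WithLp 2 (Hp × Hm)).ofLp.2 ∈ Sm.domain),
      T p = (WithLp.equiv 2 (Hp × Hm)).symm
        (Sp ⟨(p : WithLp 2 (Hp × Hm)).ofLp.1, h1⟩ + M ⟨(p : WithLp 2 (Hp × Hm)).ofLp.2, hdm h2⟩,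
         M.adjoint ⟨(p : WithLp 2 (Hp × Hm)).ofLp.1, hdp h1⟩ - Sm ⟨(p : WithLp 2 (Hp × Hm)).ofLp.2, h2⟩)) :
    IsSelfAdjoint T := by
  have hT : T = LinearPMap.fromBlocks Sp M M.adjoint (-Sm) hdm hdp := by
    refine LinearPMap.ext (Submodule.ext hTdom) fun x hx _ ↦ ?_
    obtain ⟨h₁, h₂⟩ := (hTdom x).mp hx
    rw [hTval ⟨x, hx⟩ h₁ h₂, LinearPMap.fromBlocks_apply, LinearPMap.neg_apply,
      ← sub_eq_add_neg]
    rfl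
  subst hT
  exact LinearPMap.isSelfAdjoint_fromBlocks hSp (LinearPMap.isSelfAdjoint_neg hSm)
    (LinearPMap.adjoint_isFormalAdjoint hMdense) hbm1 hbp1
    (fun x ↦ by rw [LinearPMap.neg_apply, norm_neg]; exact hMbound x) hMadjBound

/-- **Theorem 4.1 (J-self-adjointness).**  If `S₊`, `S₋` are self-adjoint, `M` is densely
defined with `dom S₋ ⊆ dom M`, `dom S₊ ⊆ dom M*`, and the relative bounds of `M` (w.r.t. `S₋`)
and of `M*` (w.r.t. `S₊`) are `< 1`, then the operator `J ∘ S`,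
`(f₊, f₋) ↦ (S₊ f₊ + M f₋, M* f₊ - S₋ f₋)`, with domain `dom S₊ × dom S₋`, is self-adjoint
in the Hilbert space `H = H₊ ⊕ H₋ = WithLp 2 (H₊ × H₋)`. -/
theorem stmt0
    (Sp : Hp →ₗ.[ℂ] Hp) (Sm : Hm →ₗ.[ℂ] Hm)
    (hSp : IsSelfAdjoint Sp) (hSm : IsSelfAdjoint Sm)
    (M : Hm →ₗ.[ℂ] Hp) (hMdense : Dense (M.domain : Set Hm))
    (hdm : Sm.domain ≤ M.domain) (hdp : Sp.domain ≤ M.adjoint.domain)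
    (am ap bm bp : ℝ) (ham : 0 ≤ am) (hap : 0 ≤ ap)
    (hbm0 : 0 ≤ bm) (hbm1 : bm < 1) (hbp0 : 0 ≤ bp) (hbp1 : bp < 1)
    (hMbound : ∀ f : Sm.domain,
      ‖M ⟨(f : Hm), hdm f.2⟩‖ ^ 2 ≤ am * ‖(f : Hm)‖ ^ 2 + bm * ‖Sm f‖ ^ 2)
    (hMadjBound : ∀ f : Sp.domain,
      ‖M.adjoint ⟨(f : Hp), hdp f.2⟩‖ ^ 2 ≤ ap * ‖(f : Hp)‖ ^ 2 + bp * ‖Sp f‖ ^ 2)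
    (T : WithLp 2 (Hp × Hm) →ₗ.[ℂ] WithLp 2 (Hp × Hm))
    (hTdom : ∀ p : WithLp 2 (Hp × Hm),
      p ∈ T.domain ↔ p.ofLp.1 ∈ Sp.domain ∧ p.ofLp.2 ∈ Sm.domain)
    (hTval : ∀ (p : T.domain) (h1 : (p : WithLp 2 (Hp × Hm)).ofLp.1 ∈ Sp.domain)
        (h2 : (p : WithLp 2 (Hp × Hm)).ofLp.2 ∈ Sm.domain),
      T p = (WithLp.equiv 2 (Hp × Hm)).symm
        (Sp ⟨(p : WithLp 2 (Hp × Hm)).ofLp.1, h1⟩ + M ⟨(p : WithLp 2 (Hp × Hm)).ofLp.2, hdm h2⟩,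
         M.adjoint ⟨(p : WithLp 2 (Hp × Hm)).ofLp.1, hdp h1⟩ - Sm ⟨(p : WithLp 2 (Hp × Hm)).ofLp.2, h2⟩)) :
    IsSelfAdjoint T :=
  stmt0_general Sp Sm hSp hSm M hMdense hdm hdp am ap bm bp hbm1 hbp1 hMbound hMadjBound T hTdom
    hTval
end
end

section
/- Let H₊, H₋ be complex Hilbert spaces and H = H₊ × H₋. Let S₊, S₋ be self-adjoint operators in H₊, H₋, let M be a densely defined operator from H₋ to H₊ with adjoint M*, with dom S₋ ⊆ dom M, dom S₊ ⊆ dom M*, and suppose there are constants a₋, a₊ ≥ 0 and 0 ≤ b₋, b₊ < 1 such that ‖M f₋‖² ≤ a₋‖f₋‖² + b₋‖S₋ f₋‖² for all f₋ ∈ dom S₋ and ‖M* f₊‖² ≤ a₊‖f₊‖² + b₊‖S₊ f₊‖² for all f₊ ∈ dom S₊. Define S on dom S = dom S₊ × dom S₋ by S(f₊, f₋) = (S₊ f₊ + M f₋, −M* f₊ + S₋ f₋). Let λ ∈ ℝ with λ ∈ ρ(S₋) and τ := ‖M (S₋ − λ)⁻¹‖ < 1. Then for every sequence (fₙ) = ((fₙ⁺,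 fₙ⁻)) in dom S with ‖fₙ‖ = 1 for all n and ‖(S − λ)fₙ‖ → 0 as n → ∞, one has liminf_{n→∞} (‖fₙ⁺‖² − ‖fₙ⁻‖²) ≥ (1 − τ²)/(2(1 + τ²)) > 0. -/
noncomputable section

open Filter Topology
open scoped ComplexInnerProductSpace

variable {Hp Hm : Type*}
  [NormedAddCommGroup Hp] [InnerProductSpace ℂ Hp] [CompleteSpace Hp]
  [NormedAddCommGroup Hm] [InnerProductSpace ℂ Hm] [CompleteSpace Hm]

/-!
Write `g = (S - λ) f` for a unit vector `f = (f₊, f₋)` in `dom S`. The second component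
`g₋ = (S₋ - λ) f₋ - M* f₊` gives `f₋ = (S₋ - λ)⁻¹ g₋ + (S₋ - λ)⁻¹ M* f₊`. As λ is real, the
resolvent `(S₋ - λ)⁻¹` is symmetric, so `(S₋ - λ)⁻¹ M*` is dominated by the adjoint bound
`‖M (S₋ - λ)⁻¹‖ ≤ c`; hence `‖f₋‖ ≤ ‖(S₋ - λ)⁻¹‖ ‖g‖ + c ‖f₊‖`. Along an approximate
eigensequence `g → 0`, and with `‖f₊‖² + ‖f₋‖² = 1` this yields
`liminf (‖f₊‖² - ‖f₋‖²) ≥ (1 - c²)/(1 + c²)`, twice the claimed bound.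
-/

theorem IsSelfAdjoint.isFormalAdjoint_self {H : Type*} [NormedAddCommGroup H]
    [InnerProductSpace ℂ H] [CompleteSpace H] {S : H →ₗ.[ℂ] H} (hS : IsSelfAdjoint S) :
    S.IsFormalAdjoint S := by
  simpa only [LinearPMap.isSelfAdjoint_def.mp hS] using
    LinearPMap.adjoint_isFormalAdjoint hS.dense_domain

namespace ResolventAt

variable {H : Type*} [NormedAddCommGroup H] [InnerProductSpace ℂ H]
  {S : H →ₗ.[ℂ] H} {R : H →L[ℂ] H}

theorem isSymmetric {lam : ℝ} (hR : ResolventAt S lam R) (hS : S.IsFormalAdjoint S) :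
    (R : H →ₗ[ℂ] H).IsSymmetric := by
  intro u v
  obtain ⟨hu, hu'⟩ := hR.1 u
  obtain ⟨hv, hv'⟩ := hR.1 v
  calc ⟪R u, v⟫ = ⟪R u, S ⟨R v, hv⟩ - (lam : ℂ) • R v⟫ := by rw [hv']
    _ = ⟪S ⟨R u, hu⟩ - (lam : ℂ) • R u, R v⟫ := by
      rw [inner_sub_right, inner_smul_right, inner_sub_left, inner_smul_left,
        Complex.conj_ofReal, hS ⟨R u, hu⟩ ⟨R v, hv⟩]
    _ = ⟪u, R v⟫ := by rw [hu']

theorem norm_le {lam : ℂ} (hR : ResolventAt S lam R) (x : S.domain) (y : H) :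
    ‖(x : H)‖ ≤ ‖R‖ * ‖S x - lam • (x : H) - y‖ + ‖R y‖ := by
  calc ‖(x : H)‖ = ‖R (S x - lam • (x : H) - y) + R y‖ := by
        rw [← map_add, sub_add_cancel, hR.2]
    _ ≤ ‖R‖ * ‖S x - lam • (x : H) - y‖ + ‖R y‖ := norm_add_le_of_le (R.le_opNorm _) le_rfl

end ResolventAt

/-- For symmetric `R`, `‖R A u‖² = ⟪T (R (R A u)), u⟫`, so `‖T R‖ ≤ c` gives `‖R A‖ ≤ c`. -/
theorem LinearMap.IsSymmetric.norm_apply_formalAdjoint_le {E F : Type*}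
    [NormedAddCommGroup E] [InnerProductSpace ℂ E] [NormedAddCommGroup F] [InnerProductSpace ℂ F]
    {R : E →L[ℂ] E} (hR : (R : E →ₗ[ℂ] E).IsSymmetric) {T : E →ₗ.[ℂ] F} {A : F →ₗ.[ℂ] E}
    (hA : A.IsFormalAdjoint T) {c : ℝ} (hc : 0 ≤ c)
    (hTR : ∀ f, ∃ h : R f ∈ T.domain, ‖T ⟨R f, h⟩‖ ≤ c * ‖f‖) (u : A.domain) :
    ‖R (A u)‖ ≤ c * ‖(u : F)‖ := by
  set w := R (A u)
  obtain ⟨hw, hTw⟩ := hTR w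
  have hww : ⟪w, w⟫ = ⟪T ⟨R w, hw⟩, (u : F)⟫ := by
    rw [hA.symm ⟨R w, hw⟩ u]
    exact (hR w (A u)).symm
  have hsq : ‖w‖ * ‖w‖ ≤ c * ‖(u : F)‖ * ‖w‖ := by
    calc ‖w‖ * ‖w‖ = RCLike.re ⟪w, w⟫ := (inner_self_eq_norm_mul_norm w).symm
      _ ≤ ‖T ⟨R w, hw⟩‖ * ‖(u : F)‖ := by
        rw [hww]; exact (RCLike.re_le_norm _).trans (norm_inner_le_norm _ _)
      _ ≤ c * ‖(u : F)‖ * ‖w‖ := by nlinarith [norm_nonneg (u : F)]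
  rcases (norm_nonneg w).eq_or_lt with hw0 | hw0
  · rw [← hw0]; positivity
  · exact le_of_mul_le_mul_right hsq hw0

theorem ResolventAt.norm_snd_le {E F : Type*} [NormedAddCommGroup E] [InnerProductSpace ℂ E]
    [CompleteSpace E] [NormedAddCommGroup F] [InnerProductSpace ℂ F] {lam : ℂ}
    {S : E →ₗ.[ℂ] E} {T : E →ₗ.[ℂ] F} {R : E →L[ℂ] E} (hR : ResolventAt S lam R) {c : ℝ}
    (hadj : ∀ u : T.adjoint.domain, ‖R (T.adjoint u)‖ ≤ c * ‖(u : F)‖)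
    {p g : WithLp 2 (F × E)} (h1 : p.fst ∈ T.adjoint.domain) (h2 : p.snd ∈ S.domain)
    (hg : S ⟨p.snd, h2⟩ - lam • p.snd - T.adjoint ⟨p.fst, h1⟩ = g.snd) :
    ‖p.snd‖ ≤ ‖R‖ * ‖g‖ + c * ‖p.fst‖ :=
  calc ‖p.snd‖ ≤ ‖R‖ * ‖g.snd‖ + ‖R (T.adjoint ⟨p.fst, h1⟩)‖ := hg ▸ hR.norm_le ⟨_, h2⟩ _
    _ ≤ ‖R‖ * ‖g‖ + c * ‖p.fst‖ :=
      add_le_add (mul_le_mul_of_nonneg_left (WithLp.norm_snd_le _ _) (norm_nonneg _)) (hadj _)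

theorem sq_sub_sq_ge_of_le_add_mul {c q s ε : ℝ} (hc0 : 0 ≤ c) (hc1 : c ≤ 1) (hs : 0 ≤ s)
    (hε : 0 ≤ ε) (hqs : q ^ 2 + s ^ 2 = 1) (h : s ≤ ε + c * q) :
    (1 - c ^ 2 - 2 * (2 * ε + ε ^ 2)) / (1 + c ^ 2) ≤ q ^ 2 - s ^ 2 := by
  have hcq : c * q ≤ 1 := by nlinarith [sq_nonneg (q - 1), sq_nonneg (c - 1)]
  have hs2 : s ^ 2 ≤ c ^ 2 * q ^ 2 + (2 * ε + ε ^ 2) := by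
    nlinarith [mul_le_mul_of_nonneg_left hcq hε]
  rw [div_le_iff₀ (by positivity)]
  nlinarith

theorem le_liminf_sq_sub_sq {ι : Type*} {l : Filter ι} [l.NeBot] {c : ℝ} (hc0 : 0 ≤ c)
    (hc1 : c ≤ 1) {q s ε : ι → ℝ} (hs : ∀ i, 0 ≤ s i) (hε : ∀ i, 0 ≤ ε i)
    (hqs : ∀ i, q i ^ 2 + s i ^ 2 = 1) (h : ∀ i, s i ≤ ε i + c * q i)
    (hε0 : Tendsto ε l (𝓝 0)) :
    (1 - c ^ 2) / (1 + c ^ 2) ≤ liminf (fun i => q i ^ 2 - s i ^ 2) l := by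
  have hlim : Tendsto (fun i => (1 - c ^ 2 - 2 * (2 * ε i + ε i ^ 2)) / (1 + c ^ 2)) l
      (𝓝 ((1 - c ^ 2) / (1 + c ^ 2))) := by
    simpa using ((hε0.const_mul 2).add (hε0.pow 2)).const_mul 2 |>.const_sub (1 - c ^ 2)
      |>.div_const (1 + c ^ 2)
  rw [← hlim.liminf_eq]
  refine liminf_le_liminf (Eventually.of_forall fun i =>
    sq_sub_sq_ge_of_le_add_mul hc0 hc1 (hs i) (hε i) (hqs i) (h i)) hlim.isBoundedUnder_ge ?_
  exact isBoundedUnder_of ⟨1, fun i => by nlinarith [hqs i, sq_nonneg (s i)]⟩ |>.isCoboundedUnder_ge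

theorem stmt3_general
    (Sp : Hp →ₗ.[ℂ] Hp) (Sm : Hm →ₗ.[ℂ] Hm)
    (hSm : IsSelfAdjoint Sm)
    (M : Hm →ₗ.[ℂ] Hp) (hMdense : Dense (M.domain : Set Hm))
    (hdm : Sm.domain ≤ M.domain) (hdp : Sp.domain ≤ M.adjoint.domain)
    (S : WithLp 2 (Hp × Hm) →ₗ.[ℂ] WithLp 2 (Hp × Hm))
    (hSdom : ∀ p : WithLp 2 (Hp × Hm),
      p ∈ S.domain ↔ p.ofLp.1 ∈ Sp.domain ∧ p.ofLp.2 ∈ Sm.domain)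
    (hSval : ∀ (p : S.domain) (h1 : (p : WithLp 2 (Hp × Hm)).ofLp.1 ∈ Sp.domain)
        (h2 : (p : WithLp 2 (Hp × Hm)).ofLp.2 ∈ Sm.domain),
      S p = (WithLp.equiv 2 (Hp × Hm)).symm
        (Sp ⟨(p : WithLp 2 (Hp × Hm)).ofLp.1, h1⟩ + M ⟨(p : WithLp 2 (Hp × Hm)).ofLp.2, hdm h2⟩,
         Sm ⟨(p : WithLp 2 (Hp × Hm)).ofLp.2, h2⟩
           - M.adjoint ⟨(p : WithLp 2 (Hp × Hm)).ofLp.1, hdp h1⟩))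
    (lam : ℝ) (Rm : Hm →L[ℂ] Hm) (hRm : ResolventAt Sm (lam : ℂ) Rm)
    (c : ℝ) (hc0 : 0 ≤ c) (hc1 : c < 1)
    (hbound : ∀ (f : Hm) (hf : Rm f ∈ Sm.domain), ‖M ⟨Rm f, hdm hf⟩‖ ≤ c * ‖f‖)
    (fn : ℕ → S.domain) (hnorm : ∀ n, ‖(fn n : WithLp 2 (Hp × Hm))‖ = 1)
    (hconv : Tendsto
      (fun n => ‖S (fn n) - (lam : ℂ) • ((fn n : WithLp 2 (Hp × Hm)))‖) atTop (𝓝 0)) :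
    (1 - c ^ 2) / (2 * (1 + c ^ 2)) ≤
      liminf (fun n =>
        ‖((fn n : WithLp 2 (Hp × Hm))).ofLp.1‖ ^ 2 - ‖((fn n : WithLp 2 (Hp × Hm))).ofLp.2‖ ^ 2) atTop ∧
    0 < (1 - c ^ 2) / (2 * (1 + c ^ 2)) := by
  have hc : 0 < 1 - c ^ 2 := by nlinarith
  refine ⟨?_, div_pos hc (by positivity)⟩
  have hadj : ∀ u : M.adjoint.domain, ‖Rm (M.adjoint u)‖ ≤ c * ‖(u : Hp)‖ :=
    (hRm.isSymmetric hSm.isFormalAdjoint_self).norm_apply_formalAdjoint_le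
      (LinearPMap.adjoint_isFormalAdjoint hMdense) hc0
      fun f => ⟨hdm (hRm.1 f).1, hbound f (hRm.1 f).1⟩
  have hsnd : ∀ n, ‖(fn n : WithLp 2 (Hp × Hm)).ofLp.2‖
      ≤ ‖Rm‖ * ‖S (fn n) - (lam : ℂ) • (fn n : WithLp 2 (Hp × Hm))‖
        + c * ‖(fn n : WithLp 2 (Hp × Hm)).ofLp.1‖ := fun n => by
    obtain ⟨h1, h2⟩ := (hSdom _).mp (fn n).2
    refine hRm.norm_snd_le hadj (hdp h1) h2 ?_
    rw [hSval _ h1 h2]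
    simp only [WithLp.ofLp_snd, Complex.coe_smul, WithLp.ofLp_fst, WithLp.equiv_symm_apply,
      WithLp.sub_snd, WithLp.toLp_snd, WithLp.smul_snd]
    abel
  have hε := hconv.const_mul ‖Rm‖
  rw [mul_zero] at hε
  have hqs : ∀ n, ‖(fn n : WithLp 2 (Hp × Hm)).ofLp.1‖ ^ 2
      + ‖(fn n : WithLp 2 (Hp × Hm)).ofLp.2‖ ^ 2 = 1 := fun n => by
    have h := WithLp.prod_norm_sq_eq_of_L2 (fn n : WithLp 2 (Hp × Hm))
    rw [hnorm n, one_pow] at h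
    exact h.symm
  calc (1 - c ^ 2) / (2 * (1 + c ^ 2)) ≤ (1 - c ^ 2) / (1 + c ^ 2) := by
        gcongr; linarith [sq_nonneg c]
    _ ≤ _ := le_liminf_sq_sub_sq hc0 hc1.le (fun n => norm_nonneg _) (fun n => by positivity)
        hqs hsnd hε

/-- **Theorem 4.1 (i).** If `lam` is real, `lam ∈ ρ(S₋)` and `τ = ‖M (S₋ - lam)⁻¹‖ < 1`
(`c` being any bound `τ ≤ c < 1`), then every approximate eigensequence
`fₙ = (fₙ⁺, fₙ⁻)` of `S` at `lam` with `‖fₙ‖ = 1` satisfies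
`liminf (‖fₙ⁺‖² - ‖fₙ⁻‖²) ≥ (1 - c²)/(2(1 + c²)) > 0`. -/
theorem stmt3
    (Sp : Hp →ₗ.[ℂ] Hp) (Sm : Hm →ₗ.[ℂ] Hm)
    (hSp : IsSelfAdjoint Sp) (hSm : IsSelfAdjoint Sm)
    (M : Hm →ₗ.[ℂ] Hp) (hMdense : Dense (M.domain : Set Hm))
    (hdm : Sm.domain ≤ M.domain) (hdp : Sp.domain ≤ M.adjoint.domain)
    (am ap bm bp : ℝ) (ham : 0 ≤ am) (hap : 0 ≤ ap)
    (hbm0 : 0 ≤ bm) (hbm1 : bm < 1) (hbp0 : 0 ≤ bp) (hbp1 : bp < 1)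
    (hMbound : ∀ f : Sm.domain,
      ‖M ⟨(f : Hm), hdm f.2⟩‖ ^ 2 ≤ am * ‖(f : Hm)‖ ^ 2 + bm * ‖Sm f‖ ^ 2)
    (hMadjBound : ∀ f : Sp.domain,
      ‖M.adjoint ⟨(f : Hp), hdp f.2⟩‖ ^ 2 ≤ ap * ‖(f : Hp)‖ ^ 2 + bp * ‖Sp f‖ ^ 2)
    (S : WithLp 2 (Hp × Hm) →ₗ.[ℂ] WithLp 2 (Hp × Hm))
    (hSdom : ∀ p : WithLp 2 (Hp × Hm),
      p ∈ S.domain ↔ p.ofLp.1 ∈ Sp.domain ∧ p.ofLp.2 ∈ Sm.domain)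
    (hSval : ∀ (p : S.domain) (h1 : (p : WithLp 2 (Hp × Hm)).ofLp.1 ∈ Sp.domain)
        (h2 : (p : WithLp 2 (Hp × Hm)).ofLp.2 ∈ Sm.domain),
      S p = (WithLp.equiv 2 (Hp × Hm)).symm
        (Sp ⟨(p : WithLp 2 (Hp × Hm)).ofLp.1, h1⟩ + M ⟨(p : WithLp 2 (Hp × Hm)).ofLp.2, hdm h2⟩,
         Sm ⟨(p : WithLp 2 (Hp × Hm)).ofLp.2, h2⟩
           - M.adjoint ⟨(p : WithLp 2 (Hp × Hm)).ofLp.1, hdp h1⟩))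
    (lam : ℝ) (Rm : Hm →L[ℂ] Hm) (hRm : ResolventAt Sm (lam : ℂ) Rm)
    (c : ℝ) (hc0 : 0 ≤ c) (hc1 : c < 1)
    (hbound : ∀ (f : Hm) (hf : Rm f ∈ Sm.domain), ‖M ⟨Rm f, hdm hf⟩‖ ≤ c * ‖f‖)
    (fn : ℕ → S.domain) (hnorm : ∀ n, ‖(fn n : WithLp 2 (Hp × Hm))‖ = 1)
    (hconv : Tendsto
      (fun n => ‖S (fn n) - (lam : ℂ) • ((fn n : WithLp 2 (Hp × Hm)))‖) atTop (𝓝 0)) :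
    (1 - c ^ 2) / (2 * (1 + c ^ 2)) ≤
      liminf (fun n =>
        ‖((fn n : WithLp 2 (Hp × Hm))).ofLp.1‖ ^ 2 - ‖((fn n : WithLp 2 (Hp × Hm))).ofLp.2‖ ^ 2) atTop ∧
    0 < (1 - c ^ 2) / (2 * (1 + c ^ 2)) :=
  stmt3_general Sp Sm hSm M hMdense hdm hdp S hSdom hSval lam Rm hRm c hc0 hc1 hbound fn hnorm hconv
end
end

section
/- Let H and K be complex Hilbert spaces, let S be a self-adjoint operator in H, and let T : dom S → K be a linear map such that ‖T f‖² ≤ a‖f‖² + b‖S f‖² for all f ∈ dom S, where a, b ≥ 0 and b < 1. If λ ∈ ρ(S) satisfies |λ − t| > √(a + b t²) for every t ∈ σ(S), then the everywhere-defined operator T(S − λ)⁻¹ : H → K is bounded with ‖T(S − λ)⁻¹‖ ≤ sup_{t ∈ σ(S)} √(a + b t²)/|λ − t| < 1. -/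
noncomputable section

open Filter Topology

variable {H K : Type*}
  [NormedAddCommGroup H] [InnerProductSpace ℂ H] [CompleteSpace H]
  [NormedAddCommGroup K] [InnerProductSpace ℂ K] [CompleteSpace K]

/-! The resolvent `R = (S - lam)⁻¹` is a bounded normal operator with `S R = 1 + lam R`, so
`‖T R f‖² ≤ a ‖R f‖² + b ‖(1 + lam R) f‖² = ⟪f, g(R) f⟫` for the symbol
`g z = a |z|² + b |1 + lam z|²`, and `‖g(R)‖ ≤ sup_{σ(R)} g`. The substitution `z = (t - lam)⁻¹`
maps `σ(S)` onto the nonzero part of `σ(R)` and turns `g` into `(a + b t²) / |lam - t|²`; since `R`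
is injective, `0 ∈ σ(R)` only as a limit of nonzero spectral points, so `sup_{σ(R)} g ≤ C²`.
Finally `g < 1` on the compact set `σ(R)` (at `0` because `g 0 = b < 1`), which gives `C < 1`. -/

namespace ResolventAt

variable {E : Type*} [NormedAddCommGroup E] [InnerProductSpace ℂ E]
  {S : E →ₗ.[ℂ] E} {lam t : ℂ} {R R' : E →L[ℂ] E}

lemma mem_domain (hR : ResolventAt S lam R) (f : E) : R f ∈ S.domain := (hR.1 f).choose

lemma apply_eq (hR : ResolventAt S lam R) (f : E) (hf : R f ∈ S.domain) :
    S ⟨R f, hf⟩ = f + lam • R f := by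
  obtain ⟨_, h⟩ := hR.1 f
  exact eq_add_of_sub_eq h

lemma injective (hR : ResolventAt S lam R) : Function.Injective R := fun f g hfg => by
  rw [← add_sub_cancel_right f (lam • R f), ← hR.apply_eq f (hR.mem_domain f),
    ← add_sub_cancel_right g (lam • R g), ← hR.apply_eq g (hR.mem_domain g)]
  simp_rw [hfg]

lemma ne_of_mem_Spec (hR : ResolventAt S lam R) (ht : t ∈ Spec S) : t ≠ lam := by
  rintro rfl
  exact ht ⟨R, hR⟩

lemma resolvent_identity (hR : ResolventAt S lam R) (hR' : ResolventAt S t R') :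
    R' = R + (t - lam) • (R * R') := by
  ext f
  have h := hR.2 ⟨R' f, hR'.mem_domain f⟩
  rw [hR'.apply_eq, add_sub_assoc, ← sub_smul, map_add, map_smul] at h
  simp [h]

lemma commute (hR : ResolventAt S lam R) (hR' : ResolventAt S t R') : Commute R R' := by
  have h₁ := hR.resolvent_identity hR'
  have h₂ := hR'.resolvent_identity hR
  by_cases hne : t = lam
  · subst hne
    simp only [sub_self, zero_smul, add_zero] at h₁
    rw [h₁]
  · have : (t - lam) • (R * R' - R' * R) = 0 := by
      linear_combination (norm := module) (-1 : ℂ) • (h₁ + h₂)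
    exact sub_eq_zero.mp ((smul_eq_zero.mp this).resolve_left (sub_ne_zero.mpr hne))

lemma of_inverse (hR : ResolventAt S lam R) {Q : E →L[ℂ] E}
    (hQ : Q * (1 - (t - lam) • R) = 1) (hQ' : (1 - (t - lam) • R) * Q = 1) :
    ResolventAt S t (R * Q) := by
  have hRQ : Commute R Q :=
    let u : (E →L[ℂ] E)ˣ := ⟨_, Q, hQ', hQ⟩
    Commute.units_inv_right (u := u)
      ((Commute.one_right R).sub_right ((Commute.refl R).smul_right _))
  refine ⟨fun f => ⟨hR.mem_domain (Q f), ?_⟩, fun g => ?_⟩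
  · change S ⟨R (Q f), hR.mem_domain (Q f)⟩ - t • R (Q f) = f
    have h := DFunLike.congr_fun hQ' f
    simp only [mul_apply_eq_comp, sub_apply, one_apply_eq_self, smul_apply] at h
    rw [hR.apply_eq]
    linear_combination (norm := module) h
  · have hRg : R (S g - t • (g : E)) = (1 - (t - lam) • R) g := by
      rw [show S g - t • (g : E) = (S g - lam • (g : E)) - (t - lam) • (g : E) by module,
        map_sub, map_smul, hR.2 g]
      rfl
    rw [hRQ.eq, mul_apply_eq_comp, hRg, ← mul_apply_eq_comp, hQ, one_apply_eq_self]

lemma isUnit_one_sub_smul_iff (hR : ResolventAt S lam R) :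
    IsUnit (1 - (t - lam) • R) ↔ InResolventSet S t := by
  constructor
  · rintro ⟨u, hu⟩
    exact ⟨R * ↑u⁻¹, hR.of_inverse (by rw [← hu, u.inv_mul]) (by rw [← hu, u.mul_inv])⟩
  · rintro ⟨R', hR'⟩
    have hid := hR.resolvent_identity hR'
    have hcomm := (hR.commute hR').eq
    refine ⟨⟨_, 1 + (t - lam) • R', ?_, ?_⟩, rfl⟩
    · simp only [sub_mul, mul_add, one_mul, mul_one, smul_mul_assoc, mul_smul_comm]
      linear_combination (norm := module) (t - lam) • hid
    · simp only [add_mul, mul_sub, one_mul, mul_one, smul_mul_assoc, mul_smul_comm]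
      rw [← hcomm]
      linear_combination (norm := module) (t - lam) • hid

lemma mem_spectrum_iff (hR : ResolventAt S lam R) {r : ℂ} (hr : r ≠ 0) :
    r ∈ spectrum ℂ R ↔ lam + r⁻¹ ∈ Spec S := by
  have h : algebraMap ℂ (E →L[ℂ] E) r - R = r • (1 - (lam + r⁻¹ - lam) • R) := by
    rw [add_sub_cancel_left, smul_sub, smul_smul, mul_inv_cancel₀ hr, one_smul,
      Algebra.algebraMap_eq_smul_one]
  rw [spectrum.mem_iff, h]
  exact not_congr ((isUnit_smul_iff (Units.mk0 r hr) _).trans hR.isUnit_one_sub_smul_iff)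

lemma inv_sub_mem_spectrum (hR : ResolventAt S lam R) (ht : t ∈ Spec S) :
    (t - lam)⁻¹ ∈ spectrum ℂ R := by
  have hne := sub_ne_zero.mpr (hR.ne_of_mem_Spec ht)
  rwa [hR.mem_spectrum_iff (inv_ne_zero hne), inv_inv, add_sub_cancel]

end ResolventAt

section SelfAdjoint

open ComplexConjugate
open scoped InnerProductSpace InnerProduct

variable {E : Type*} [NormedAddCommGroup E] [InnerProductSpace ℂ E] [CompleteSpace E]
  {S : E →ₗ.[ℂ] E} {lam : ℂ} {R : E →L[ℂ] E}

lemma IsSelfAdjoint.inner_apply_left (hS : IsSelfAdjoint S) (x y : S.domain) :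
    ⟪S x, (y : E)⟫_ℂ = ⟪(x : E), S y⟫_ℂ := by
  have h := LinearPMap.adjoint_isFormalAdjoint hS.dense_domain
  rw [LinearPMap.isSelfAdjoint_def.mp hS] at h
  exact h x y

lemma IsSelfAdjoint.exists_mem_domain_of_inner (hS : IsSelfAdjoint S) {v w : E}
    (hw : ∀ g : S.domain, ⟪w, (g : E)⟫_ℂ = ⟪v, S g⟫_ℂ) : ∃ hv : v ∈ S.domain, S ⟨v, hv⟩ = w := by
  suffices ∃ hv : v ∈ S.adjoint.domain, S.adjoint ⟨v, hv⟩ = w by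
    rwa [LinearPMap.isSelfAdjoint_def.mp hS] at this
  have hv := LinearPMap.mem_adjoint_domain_of_exists v ⟨w, hw⟩
  exact ⟨hv, LinearPMap.adjoint_apply_eq hS.dense_domain ⟨v, hv⟩ hw⟩

lemma ResolventAt.star (hS : IsSelfAdjoint S) (hR : ResolventAt S lam R) :
    ResolventAt S (conj lam) (star R) := by
  rw [ContinuousLinearMap.star_eq_adjoint]
  refine ⟨fun f => ?_, fun g => ?_⟩
  · have key : ∀ g : S.domain,
        ⟪f + conj lam • (R†) f, (g : E)⟫_ℂ = ⟪(R†) f, S g⟫_ℂ := by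
      intro g
      have h : ⟪(R†) f, (S g : E)⟫_ℂ
          = ⟪(R†) f, S g - lam • (g : E)⟫_ℂ + lam * ⟪(R†) f, (g : E)⟫_ℂ := by
        rw [inner_sub_right, inner_smul_right]; ring
      rw [h, ContinuousLinearMap.adjoint_inner_left, hR.2 g, inner_add_left, inner_smul_left,
        Complex.conj_conj]
    obtain ⟨hv, heq⟩ := hS.exists_mem_domain_of_inner key
    exact ⟨hv, by rw [heq, add_sub_cancel_right]⟩
  · refine ext_inner_right ℂ fun h => ?_
    rw [ContinuousLinearMap.adjoint_inner_left, inner_sub_left, inner_smul_left, Complex.conj_conj,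
      hS.inner_apply_left g ⟨R h, hR.mem_domain h⟩, hR.apply_eq h, inner_add_right,
      inner_smul_right, add_sub_cancel_right]

lemma ResolventAt.isStarNormal (hS : IsSelfAdjoint S) (hR : ResolventAt S lam R) :
    IsStarNormal R :=
  ⟨(hR.star hS).commute hR⟩

end SelfAdjoint

/-- If `0` were isolated in the spectrum, a bump equal to `1` at `0` and vanishing on the rest of
the spectrum would give `R * cfc bump R = 0`, so `cfc bump R = 0` by injectivity, contradicting
`bump 0 = 1`. -/
lemma spectrum_subset_closure_diff_zero {E : Type*} [NormedAddCommGroup E]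
    [InnerProductSpace ℂ E] [CompleteSpace E] {R : E →L[ℂ] E} [IsStarNormal R]
    (hR : Function.Injective R) : spectrum ℂ R ⊆ closure (spectrum ℂ R \ {0}) := by
  intro r hr
  rcases eq_or_ne r 0 with rfl | hr0
  swap
  · exact subset_closure ⟨hr, hr0⟩
  by_contra hclos
  obtain ⟨ε, hε, hfar⟩ : ∃ ε > 0, ∀ z ∈ spectrum ℂ R \ {0}, ε ≤ ‖z‖ := by
    simpa [Metric.mem_closure_iff, dist_eq_norm] using hclos
  set bump : ℂ → ℂ := fun z => ((max 0 (1 - ‖z‖ / ε) : ℝ) : ℂ)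
  have hvanish : (spectrum ℂ R).EqOn (fun z => z * bump z) 0 := by
    intro z hz
    by_cases hz0 : z = 0
    · simp [hz0]
    · have : 1 - ‖z‖ / ε ≤ 0 := by
        rw [sub_nonpos, one_le_div hε]; exact hfar z ⟨hz, hz0⟩
      simp [bump, max_eq_left this]
  have hcfc : cfc bump R = 0 := by
    have hmul : R * cfc bump R = 0 := by
      rw [← cfc_zero ℂ R, ← cfc_congr hvanish, cfc_mul (fun z => z) bump R, cfc_id' ℂ R]
    ext f
    exact hR (by simpa using DFunLike.congr_fun hmul f)
  have := (eqOn_of_cfc_eq_cfc (hcfc.trans (cfc_zero ℂ R).symm)) hr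
  simp [bump] at this

section Symbol

open scoped InnerProductSpace

def resolventSymbol (a b : ℝ) (lam z : ℂ) : ℝ := a * ‖z‖ ^ 2 + b * ‖1 + lam * z‖ ^ 2

variable {a b c : ℝ} {lam t : ℂ}

lemma continuous_resolventSymbol : Continuous (resolventSymbol a b lam) := by
  unfold resolventSymbol; fun_prop

lemma resolventSymbol_nonneg (ha : 0 ≤ a) (hb : 0 ≤ b) (z : ℂ) :
    0 ≤ resolventSymbol a b lam z := by
  unfold resolventSymbol; positivity

lemma resolventSymbol_inv_sub (ha : 0 ≤ a) (hb : 0 ≤ b) (ht : t ≠ lam) :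
    resolventSymbol a b lam (t - lam)⁻¹ = (Real.sqrt (a + b * ‖t‖ ^ 2) / ‖lam - t‖) ^ 2 := by
  have hne : t - lam ≠ 0 := sub_ne_zero.mpr ht
  have h : 1 + lam * (t - lam)⁻¹ = t / (t - lam) := by field_simp; ring
  rw [resolventSymbol, h, div_pow, Real.sq_sqrt (by positivity), norm_div, norm_inv, norm_sub_rev]
  field_simp

variable {E : Type*} [NormedAddCommGroup E] [InnerProductSpace ℂ E] [CompleteSpace E]
  {R : E →L[ℂ] E} [IsStarNormal R]

lemma cfc_resolventSymbol :
    cfc (fun z => (resolventSymbol a b lam z : ℂ)) R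
      = (a : ℂ) • (star R * R) + (b : ℂ) • (star (1 + lam • R) * (1 + lam • R)) := by
  have hsq : ∀ w : ℂ, ((‖w‖ ^ 2 : ℝ) : ℂ) = star w * w := fun w => by
    rw [mul_comm, RCLike.star_def, Complex.mul_conj, Complex.normSq_eq_norm_sq]
  have hW : cfc (fun z : ℂ => 1 + lam * z) R = 1 + lam • R := by
    rw [cfc_const_add 1 (fun z => lam * z) R, cfc_const_mul_id lam R, map_one]
  simp only [resolventSymbol, Complex.ofReal_add, Complex.ofReal_mul, hsq]
  rw [cfc_add .., cfc_const_mul .., cfc_const_mul .., cfc_mul .., cfc_mul .., cfc_star, cfc_star,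
    cfc_id' ℂ R, hW]

lemma norm_sq_add_le_of_resolventSymbol_le (ha : 0 ≤ a) (hb : 0 ≤ b) (hc0 : 0 ≤ c)
    (hc : ∀ z ∈ spectrum ℂ R, resolventSymbol a b lam z ≤ c) (f : E) :
    a * ‖R f‖ ^ 2 + b * ‖f + lam • R f‖ ^ 2 ≤ c * ‖f‖ ^ 2 := by
  set M := cfc (fun z => (resolventSymbol a b lam z : ℂ)) R
  have hM : ‖M‖ ≤ c := norm_cfc_le hc0 fun z hz => by
    rw [Complex.norm_real, Real.norm_of_nonneg (resolventSymbol_nonneg ha hb z)]; exact hc z hz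
  have hinner : ⟪f, M f⟫_ℂ = ((a * ‖R f‖ ^ 2 + b * ‖f + lam • R f‖ ^ 2 : ℝ) : ℂ) := by
    simp only [M, cfc_resolventSymbol, add_apply, smul_apply, mul_apply_eq_comp, inner_add_right,
      inner_smul_right, ContinuousLinearMap.star_eq_adjoint,
      ContinuousLinearMap.adjoint_inner_right,
      inner_self_eq_norm_sq_to_K, one_apply_eq_self]
    push_cast
    rfl
  calc a * ‖R f‖ ^ 2 + b * ‖f + lam • R f‖ ^ 2 = (⟪f, M f⟫_ℂ).re := by
        rw [hinner, Complex.ofReal_re]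
    _ ≤ ‖f‖ * ‖M f‖ := (Complex.re_le_norm _).trans (norm_inner_le_norm f (M f))
    _ ≤ ‖f‖ * (c * ‖f‖) := by gcongr; exact M.le_of_opNorm_le hM f
    _ = c * ‖f‖ ^ 2 := by ring

end Symbol

namespace ResolventAt

variable {E : Type*} [NormedAddCommGroup E] [InnerProductSpace ℂ E]
  {S : E →ₗ.[ℂ] E} {lam : ℂ} {R : E →L[ℂ] E} {a b c : ℝ}

lemma exists_mem_Spec_resolventSymbol_eq (hR : ResolventAt S lam R) (ha : 0 ≤ a) (hb : 0 ≤ b)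
    {z : ℂ} (hz : z ∈ spectrum ℂ R) (hz0 : z ≠ 0) :
    ∃ t ∈ Spec S, resolventSymbol a b lam z = (Real.sqrt (a + b * ‖t‖ ^ 2) / ‖lam - t‖) ^ 2 := by
  have ht := (hR.mem_spectrum_iff hz0).mp hz
  refine ⟨_, ht, ?_⟩
  rw [← resolventSymbol_inv_sub ha hb (hR.ne_of_mem_Spec ht), add_sub_cancel_left, inv_inv]

variable [CompleteSpace E]

lemma resolventSymbol_le_sq (hS : IsSelfAdjoint S) (hR : ResolventAt S lam R) (ha : 0 ≤ a)
    (hb : 0 ≤ b) (hc : ∀ t ∈ Spec S, Real.sqrt (a + b * ‖t‖ ^ 2) / ‖lam - t‖ ≤ c) :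
    ∀ z ∈ spectrum ℂ R, resolventSymbol a b lam z ≤ c ^ 2 := by
  have := hR.isStarNormal hS
  have hclosed : IsClosed {z | resolventSymbol a b lam z ≤ c ^ 2} :=
    isClosed_le continuous_resolventSymbol continuous_const
  refine fun z hz => hclosed.closure_subset_iff.mpr ?_
    (spectrum_subset_closure_diff_zero hR.injective hz)
  rintro z ⟨hz, hz0⟩
  obtain ⟨t, ht, heq⟩ := hR.exists_mem_Spec_resolventSymbol_eq ha hb hz hz0
  rw [Set.mem_ofPred_eq, heq]
  exact pow_le_pow_left₀ (by positivity) (hc t ht) 2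

lemma sSup_lt_one (hR : ResolventAt S lam R) (ha : 0 ≤ a) (hb : 0 ≤ b) (hb1 : b < 1)
    (hlt : ∀ t ∈ Spec S, Real.sqrt (a + b * ‖t‖ ^ 2) / ‖lam - t‖ < 1) :
    sSup ((fun t : ℂ => Real.sqrt (a + b * ‖t‖ ^ 2) / ‖lam - t‖) '' Spec S) < 1 := by
  have hsymb : ∀ z ∈ spectrum ℂ R, 0 < 1 - resolventSymbol a b lam z := by
    intro z hz
    rw [sub_pos]
    rcases eq_or_ne z 0 with rfl | hz0
    · simpa [resolventSymbol] using hb1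
    obtain ⟨t, ht, heq⟩ := hR.exists_mem_Spec_resolventSymbol_eq ha hb hz hz0
    rw [heq]
    exact pow_lt_one₀ (by positivity) (hlt t ht) two_ne_zero
  obtain ⟨ε, hε, hεle⟩ := (spectrum.isCompact R).exists_forall_le'
    (f := fun z => 1 - resolventSymbol a b lam z)
    (continuous_const.sub continuous_resolventSymbol).continuousOn hsymb
  refine (Real.sSup_le ?_ (Real.sqrt_nonneg (1 - ε))).trans_lt ?_
  · rintro _ ⟨t, ht, rfl⟩
    refine Real.le_sqrt_of_sq_le ?_
    have := hεle _ (hR.inv_sub_mem_spectrum ht)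
    rw [resolventSymbol_inv_sub ha hb (hR.ne_of_mem_Spec ht)] at this
    linarith
  · rw [Real.sqrt_lt' one_pos]
    linarith

end ResolventAt

/-- **Lemma 3.1.** If `S` is self-adjoint, `‖T f‖² ≤ a ‖f‖² + b ‖S f‖²` on `dom S` with
`b < 1`, and `lam ∈ ρ(S)` satisfies `|lam - t| > √(a + b t²)` for every `t ∈ σ(S)`, then
`‖T (S - lam)⁻¹‖ ≤ sup_{t ∈ σ(S)} √(a + b t²)/|lam - t| < 1`. -/
theorem stmt9
    (S : H →ₗ.[ℂ] H) (hS : IsSelfAdjoint S)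
    (T : S.domain →ₗ[ℂ] K)
    (a b : ℝ) (ha : 0 ≤ a) (hb0 : 0 ≤ b) (hb1 : b < 1)
    (hT : ∀ f : S.domain, ‖T f‖ ^ 2 ≤ a * ‖(f : H)‖ ^ 2 + b * ‖S f‖ ^ 2)
    (lam : ℂ) (R : H →L[ℂ] H) (hR : ResolventAt S lam R)
    (hsep : ∀ t ∈ Spec S, Real.sqrt (a + b * ‖t‖ ^ 2) < ‖lam - t‖)
    (C : ℝ)
    (hC : C = sSup ((fun t : ℂ => Real.sqrt (a + b * ‖t‖ ^ 2) / ‖lam - t‖) '' Spec S)) :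
    (∀ (f : H) (hf : R f ∈ S.domain), ‖T ⟨R f, hf⟩‖ ≤ C * ‖f‖) ∧ C < 1 := by
  have hlt : ∀ t ∈ Spec S, Real.sqrt (a + b * ‖t‖ ^ 2) / ‖lam - t‖ < 1 := fun t ht =>
    (div_lt_one ((Real.sqrt_nonneg _).trans_lt (hsep t ht))).mpr (hsep t ht)
  have hle : ∀ t ∈ Spec S, Real.sqrt (a + b * ‖t‖ ^ 2) / ‖lam - t‖ ≤ C := fun t ht =>
    hC ▸ le_csSup ⟨1, by rintro _ ⟨s, hs, rfl⟩; exact (hlt s hs).le⟩ (Set.mem_image_of_mem _ ht)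
  have hC0 : 0 ≤ C := hC ▸ Real.sSup_nonneg (by rintro _ ⟨t, -, rfl⟩; positivity)
  refine ⟨fun f hf => ?_, hC ▸ hR.sSup_lt_one ha hb0 hb1 hlt⟩
  have := hR.isStarNormal hS
  have hbound := norm_sq_add_le_of_resolventSymbol_le ha hb0 (sq_nonneg C)
    (hR.resolventSymbol_le_sq hS ha hb0 hle) f
  rw [← hR.apply_eq f hf] at hbound
  refine le_of_pow_le_pow_left₀ two_ne_zero (by positivity) ?_
  calc ‖T ⟨R f, hf⟩‖ ^ 2 ≤ a * ‖R f‖ ^ 2 + b * ‖S ⟨R f, hf⟩‖ ^ 2 := hT _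
    _ ≤ (C * ‖f‖) ^ 2 := by rw [mul_pow]; exact hbound
end
end

section
/- Let a ≥ 0 and 0 ≤ b < 1. Then ⋃_{t ∈ ℝ} {λ ∈ ℂ : |λ − t| ≤ √(a + b t²)} = {λ ∈ ℂ : (Im λ)² ≤ a + (b/(1 − b))·(Re λ)²}. -/
/-! The disc centred at `t` contains `lam = x + iy` iff `y² ≤ a + (b t² - (x - t)²)`. Completing
the square, `b t² - (x - t)² = b/(1-b) x² - (1-b) (t - x/(1-b))²`, so for `b < 1` the right-hand
side is maximised over `t` exactly at `t = x/(1-b)`, where it equals `a + b/(1-b) x²`. -/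

lemma Complex.sq_norm_sub_ofReal (z : ℂ) (t : ℝ) :
    ‖z - t‖ ^ 2 = (z.re - t) ^ 2 + z.im ^ 2 := by
  rw [Complex.sq_norm, Complex.normSq_apply]
  simp only [Complex.sub_re, Complex.sub_im, Complex.ofReal_re, Complex.ofReal_im, sub_zero]
  ring

lemma Complex.norm_sub_ofReal_le_sqrt_iff {s : ℝ} (hs : 0 ≤ s) (z : ℂ) (t : ℝ) :
    ‖z - t‖ ≤ √s ↔ (z.re - t) ^ 2 + z.im ^ 2 ≤ s := by
  rw [Real.le_sqrt (norm_nonneg _) hs, Complex.sq_norm_sub_ofReal]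

lemma mul_sq_sub_sub_sq_eq {b : ℝ} (hb : b < 1) (x t : ℝ) :
    b * t ^ 2 - (x - t) ^ 2 = b / (1 - b) * x ^ 2 - (1 - b) * (t - x / (1 - b)) ^ 2 := by
  have : 1 - b ≠ 0 := by linarith
  field_simp
  ring

/-- **Lemma 3.1, equality (2.2).** For `a ≥ 0` and `0 ≤ b < 1`, the union over all real
`t` of the closed discs centered at `t` of radius `√(a + b t²)` equals the closed
hyperbolic region `{lam : (Im lam)² ≤ a + (b/(1-b))·(Re lam)²}`. -/
theorem stmt10 (a b : ℝ) (ha : 0 ≤ a) (hb0 : 0 ≤ b) (hb1 : b < 1) :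
    (⋃ t : ℝ, {lam : ℂ | ‖lam - (t : ℂ)‖ ≤ Real.sqrt (a + b * t ^ 2)}) =
      {lam : ℂ | lam.im ^ 2 ≤ a + b / (1 - b) * lam.re ^ 2} := by
  ext lam
  simp only [Set.mem_iUnion, Set.mem_ofPred_eq]
  have mem_disc (t : ℝ) : ‖lam - t‖ ≤ √(a + b * t ^ 2) ↔
      lam.im ^ 2 ≤ a + b / (1 - b) * lam.re ^ 2 - (1 - b) * (t - lam.re / (1 - b)) ^ 2 := by
    rw [Complex.norm_sub_ofReal_le_sqrt_iff (by positivity),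
      ← sub_add_cancel (b * t ^ 2) ((lam.re - t) ^ 2), mul_sq_sub_sub_sq_eq hb1]
    constructor <;> intro h <;> linarith
  constructor
  · rintro ⟨t, ht⟩
    have : 0 ≤ (1 - b) * (t - lam.re / (1 - b)) ^ 2 := mul_nonneg (by linarith) (sq_nonneg _)
    linarith [(mem_disc t).1 ht]
  · intro h
    exact ⟨lam.re / (1 - b), (mem_disc _).2 (by simpa using h)⟩
end

section
/- Let H be a complex Hilbert space and let J, J₀ be bounded operators on H such that J = J* = J⁻¹, J₀² = I, J₀* = J J₀ J, and ⟨J J₀ f, f⟩ ≥ 0 for all f ∈ H. Set τ₀ := ‖J₀‖ and ‖f‖₀² := ⟨J J₀ f, f⟩ (which is real and nonnegative). Then for every f ∈ H: τ₀⁻¹‖f‖² ≤ ‖f‖₀² ≤ τ₀‖f‖², and for every bounded operator T on H and every f ∈ H: ‖T f‖₀ ≤ τ₀·‖T‖·‖f‖₀. -/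
/-!
`S = J J₀` is self-adjoint, positive and has the bounded inverse `J₀ J`; since `J` is unitary,
`‖S‖` and `‖S⁻¹‖` are both at most `τ₀`. The upper bound is then `⟨S f, f⟩ ≤ ‖S f‖ ‖f‖`. The lower
bound is Cauchy–Schwarz for the positive form `(f, g)₀ = ⟨S f, g⟩` applied to `S⁻¹ f` and `f`:
`‖f‖⁴ = |(S⁻¹ f, f)₀|² ≤ ⟨f, S⁻¹ f⟩ ‖f‖₀² ≤ τ₀ ‖f‖² ‖f‖₀²`. The two bounds together give
`‖T f‖₀² ≤ τ₀ ‖T f‖² ≤ τ₀ ‖T‖² ‖f‖² ≤ τ₀² ‖T‖² ‖f‖₀²`.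
-/

open RCLike

namespace ContinuousLinearMap

variable {𝕜 E : Type*} [RCLike 𝕜] [NormedAddCommGroup E] [InnerProductSpace 𝕜 E]

local notation "⟪" x ", " y "⟫" => inner 𝕜 x y

abbrev IsPositive.preInnerProductCore {T : E →L[𝕜] E} (hT : T.IsPositive) :
    PreInnerProductSpace.Core 𝕜 E where
  inner x y := ⟪T x, y⟫
  conj_inner_symm x y := by rw [inner_conj_symm, hT.inner_left_eq_inner_right]
  re_inner_nonneg := hT.re_inner_nonneg_left
  add_left x y z := by simp only [map_add, inner_add_left]
  smul_left x y r := by simp only [map_smul, inner_smul_left]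

theorem IsPositive.norm_inner_map_sq_le {T : E →L[𝕜] E} (hT : T.IsPositive) (x y : E) :
    ‖⟪T x, y⟫‖ ^ 2 ≤ re ⟪T x, x⟫ * re ⟪T y, y⟫ := by
  have h := @InnerProductSpace.Core.inner_mul_inner_self_le 𝕜 E _ _ _ hT.preInnerProductCore x y
  change ‖⟪T x, y⟫‖ * ‖⟪T y, x⟫‖ ≤ _ at h
  rwa [hT.inner_left_eq_inner_right y x, ← inner_conj_symm y (T x), norm_conj, ← sq] at h

theorem IsPositive.sq_norm_le_opNorm_mul_re_inner {T R : E →L[𝕜] E} (hT : T.IsPositive)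
    (hR : ∀ x, T (R x) = x) (x : E) : ‖x‖ ^ 2 ≤ ‖R‖ * re ⟪T x, x⟫ := by
  rcases eq_or_ne x 0 with rfl | hx
  · simp
  have hcs := hT.norm_inner_map_sq_le (R x) x
  rw [hR, inner_self_eq_norm_sq_to_K] at hcs
  have hRx : re ⟪x, R x⟫ ≤ ‖R‖ * ‖x‖ ^ 2 := calc
    re ⟪x, R x⟫ ≤ ‖x‖ * ‖R x‖ := re_inner_le_norm _ _
    _ ≤ ‖x‖ * (‖R‖ * ‖x‖) := by gcongr; exact R.le_opNorm x
    _ = ‖R‖ * ‖x‖ ^ 2 := by ring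
  have key : ‖x‖ ^ 2 * ‖x‖ ^ 2 ≤ ‖x‖ ^ 2 * (‖R‖ * re ⟪T x, x⟫) := calc
    ‖x‖ ^ 2 * ‖x‖ ^ 2 = ‖((‖x‖ : 𝕜) ^ 2)‖ ^ 2 := by simp; ring
    _ ≤ re ⟪x, R x⟫ * re ⟪T x, x⟫ := hcs
    _ ≤ ‖R‖ * ‖x‖ ^ 2 * re ⟪T x, x⟫ := by gcongr; exact hT.re_inner_nonneg_left x
    _ = ‖x‖ ^ 2 * (‖R‖ * re ⟪T x, x⟫) := by ring
  exact le_of_mul_le_mul_left key (by positivity)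

theorem norm_map_of_isSelfAdjoint_of_comp_self [CompleteSpace E] {J : E →L[𝕜] E}
    (hJsa : IsSelfAdjoint J) (hJinv : J ∘L J = ContinuousLinearMap.id 𝕜 E) (x : E) :
    ‖J x‖ = ‖x‖ :=
  J.norm_map_of_mem_unitary
    (Unitary.mem_iff.mpr ⟨by rw [hJsa.star_eq]; exact hJinv, by rw [hJsa.star_eq]; exact hJinv⟩) x

end ContinuousLinearMap

theorem sqrt_map_le_mul_opNorm_mul_sqrt {𝕜 E : Type*} [NontriviallyNormedField 𝕜]
    [SeminormedAddCommGroup E] [NormedSpace 𝕜 E] {q : E → ℝ} {c : ℝ} (hc : 0 ≤ c)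
    (hupper : ∀ x, q x ≤ c * ‖x‖ ^ 2) (hlower : ∀ x, ‖x‖ ^ 2 ≤ c * q x)
    (T : E →L[𝕜] E) (x : E) : √(q (T x)) ≤ c * ‖T‖ * √(q x) := by
  have h : q (T x) ≤ (c * ‖T‖) ^ 2 * q x := calc
    q (T x) ≤ c * ‖T x‖ ^ 2 := hupper (T x)
    _ ≤ c * (‖T‖ * ‖x‖) ^ 2 := by gcongr; exact T.le_opNorm x
    _ ≤ c * ‖T‖ ^ 2 * (c * q x) := by rw [mul_pow, ← mul_assoc]; gcongr; exact hlower x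
    _ = (c * ‖T‖) ^ 2 * q x := by ring
  calc √(q (T x)) ≤ √((c * ‖T‖) ^ 2 * q x) := Real.sqrt_le_sqrt h
    _ = c * ‖T‖ * √(q x) := by rw [Real.sqrt_mul (sq_nonneg _), Real.sqrt_sq (by positivity)]

open ContinuousLinearMap in
theorem stmt15_general {H : Type*} [NormedAddCommGroup H] [InnerProductSpace ℂ H] [CompleteSpace H]
    (J J0 : H →L[ℂ] H)
    (hJsa : IsSelfAdjoint J) (hJinv : J ∘L J = ContinuousLinearMap.id ℂ H)
    (hJ0inv : J0 ∘L J0 = ContinuousLinearMap.id ℂ H)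
    (hJ0adj : ContinuousLinearMap.adjoint J0 = J ∘L J0 ∘L J)
    (hpos : ∀ f : H, 0 ≤ (inner ℂ (J (J0 f)) f : ℂ).re) :
    (∀ f : H, ‖J0‖⁻¹ * ‖f‖ ^ 2 ≤ (inner ℂ (J (J0 f)) f : ℂ).re ∧
      (inner ℂ (J (J0 f)) f : ℂ).re ≤ ‖J0‖ * ‖f‖ ^ 2) ∧
    (∀ (T : H →L[ℂ] H) (f : H),
      Real.sqrt ((inner ℂ (J (J0 (T f))) (T f) : ℂ).re) ≤
        ‖J0‖ * ‖T‖ * Real.sqrt ((inner ℂ (J (J0 f)) f : ℂ).re)) := by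
  have hJ := norm_map_of_isSelfAdjoint_of_comp_self hJsa hJinv
  have hS : (J ∘L J0).IsPositive := by
    refine isPositive_def'.mpr ⟨?_, hpos⟩
    rw [IsSelfAdjoint, star_eq_adjoint, adjoint_comp, hJ0adj, hJsa.adjoint_eq]
    simp only [comp_assoc, hJinv, comp_id]
  have hupper (f : H) : (inner ℂ (J (J0 f)) f).re ≤ ‖J0‖ * ‖f‖ ^ 2 := calc
    (inner ℂ (J (J0 f)) f).re ≤ ‖J (J0 f)‖ * ‖f‖ := re_inner_le_norm (𝕜 := ℂ) _ _
    _ ≤ ‖J0‖ * ‖f‖ * ‖f‖ := by rw [hJ]; gcongr; exact J0.le_opNorm f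
    _ = ‖J0‖ * ‖f‖ ^ 2 := by ring
  have hS_rightInverse (f : H) : (J ∘L J0) ((J0 ∘L J) f) = f := by
    rw [← comp_apply, comp_assoc, ← comp_assoc J0, hJ0inv, id_comp, hJinv, id_apply]
  have hJ0J_norm : ‖J0 ∘L J‖ ≤ ‖J0‖ :=
    opNorm_le_bound _ (norm_nonneg _) fun f => by simpa [hJ] using J0.le_opNorm (J f)
  have hlower (f : H) : ‖f‖ ^ 2 ≤ ‖J0‖ * (inner ℂ (J (J0 f)) f).re := calc
    ‖f‖ ^ 2 ≤ ‖J0 ∘L J‖ * (inner ℂ (J (J0 f)) f).re :=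
      hS.sq_norm_le_opNorm_mul_re_inner hS_rightInverse f
    _ ≤ ‖J0‖ * (inner ℂ (J (J0 f)) f).re := mul_le_mul_of_nonneg_right hJ0J_norm (hpos f)
  refine ⟨fun f => ⟨?_, hupper f⟩, sqrt_map_le_mul_opNorm_mul_sqrt (norm_nonneg _) hupper hlower⟩
  rcases (norm_nonneg J0).eq_or_lt with h | h
  · simpa [← h] using hpos f
  · rw [inv_mul_le_iff₀ h]
    exact hlower f

/-- **Lemma 5.1, first part.** Let `J`, `J₀` be bounded operators on the Hilbert space `H`
with `J = J* = J⁻¹`, `J₀² = I`, `J₀* = J J₀ J` and `⟨J J₀ f, f⟩ ≥ 0` for all `f`.  With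
`τ₀ = ‖J₀‖` and `‖f‖₀² = ⟨J J₀ f, f⟩`, one has `τ₀⁻¹ ‖f‖² ≤ ‖f‖₀² ≤ τ₀ ‖f‖²` for all `f`,
and `‖T f‖₀ ≤ τ₀ ‖T‖ ‖f‖₀` for every bounded operator `T` on `H` and every `f`. -/
theorem stmt15 {H : Type*} [NormedAddCommGroup H] [InnerProductSpace ℂ H] [CompleteSpace H]
    (J J0 : H →L[ℂ] H)
    (hJsa : IsSelfAdjoint J) (hJinv : J ∘L J = ContinuousLinearMap.id ℂ H)
    (hJ0inv : J0 ∘L J0 = ContinuousLinearMap.id ℂ H)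
    (hJ0adj : ContinuousLinearMap.adjoint J0 = J ∘L J0 ∘L J)
    (hreal : ∀ f : H, (inner ℂ (J (J0 f)) f : ℂ).im = 0)
    (hpos : ∀ f : H, 0 ≤ (inner ℂ (J (J0 f)) f : ℂ).re) :
    (∀ f : H, ‖J0‖⁻¹ * ‖f‖ ^ 2 ≤ (inner ℂ (J (J0 f)) f : ℂ).re ∧
      (inner ℂ (J (J0 f)) f : ℂ).re ≤ ‖J0‖ * ‖f‖ ^ 2) ∧
    (∀ (T : H →L[ℂ] H) (f : H),
      Real.sqrt ((inner ℂ (J (J0 (T f))) (T f) : ℂ).re) ≤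
        ‖J0‖ * ‖T‖ * Real.sqrt ((inner ℂ (J (J0 f)) f : ℂ).re)) :=
  stmt15_general J J0 hJsa hJinv hJ0inv hJ0adj hpos
end

section
/- Let H be a complex Hilbert space and let J, J₀ be bounded operators on H such that J = J* = J⁻¹, J₀² = I, J₀* = J J₀ J, and ⟨J J₀ f, f⟩ ≥ 0 for all f ∈ H. Set τ₀ := ‖J₀‖, ‖f‖₀² := ⟨J J₀ f, f⟩, and E_± := (I ± J₀)/2. Then for every f ∈ H and each choice of sign: ‖E_± f‖₀² ≤ ((1 + τ₀)/2)·‖f‖² and ‖E_± f‖² ≤ ((1 + τ₀)/2)·‖f‖₀². -/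
/-!
Write `T = J J₀` (a positive operator, since `J₀* = J J₀ J` makes it self-adjoint) and
`E = E₊`. The same relation gives `E* = J E J`, hence `E* T E = J E`, which bounds `‖E f‖₀²` by
`‖E‖ ‖f‖²`. For the other inequality, `E* E = T R` with `R = J₀ E J E` and `E R = (E J) E`, so
Cauchy–Schwarz for the form `⟨T ·, ·⟩` gives `‖E f‖⁴ ≤ ⟨T R f, R f⟩ ⟨T f, f⟩ ≤ ‖E‖ ‖E f‖² ‖f‖₀²`.
Both constants are then bounded by `‖E₊‖ ≤ (1 + ‖J₀‖)/2`. Finally, `E₋` is `E₊` for the pair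
`(-J, -J₀)`, which satisfies the same hypotheses with the same `T`.
-/

open ContinuousLinearMap
open scoped InnerProductSpace

section

variable {H : Type*} [NormedAddCommGroup H] [InnerProductSpace ℂ H]

theorem ContinuousLinearMap.IsPositive.norm_inner_sq_le [CompleteSpace H] {T : H →L[ℂ] H}
    (hT : T.IsPositive) (x y : H) : ‖⟪T x, y⟫_ℂ‖ ^ 2 ≤ (⟪T x, x⟫_ℂ).re * (⟪T y, y⟫_ℂ).re := by
  obtain ⟨S, rfl⟩ :=
    CStarAlgebra.nonneg_iff_eq_star_mul_self.mp ((nonneg_iff_isPositive T).mpr hT)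
  have hS (u v : H) : ⟪(star S * S) u, v⟫_ℂ = ⟪S u, S v⟫_ℂ := adjoint_inner_left S v (S u)
  have hn (u : H) : (⟪u, u⟫_ℂ).re = ‖u‖ ^ 2 := inner_self_eq_norm_sq (𝕜 := ℂ) u
  rw [hS, hS, hS, hn, hn]
  calc ‖⟪S x, S y⟫_ℂ‖ ^ 2 ≤ (‖S x‖ * ‖S y‖) ^ 2 := by gcongr; exact norm_inner_le_norm _ _
    _ = ‖S x‖ ^ 2 * ‖S y‖ ^ 2 := mul_pow _ _ _

theorem ContinuousLinearMap.norm_apply_sq_le_of_star_mul_self_eq [CompleteSpace H]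
    {T A R B : H →L[ℂ] H} (hT : T.IsPositive) (hAR : star A * A = T * R)
    (hRB : A * R = B * A) (x : H) :
    ‖A x‖ ^ 2 ≤ ‖B‖ * (⟪T x, x⟫_ℂ).re := by
  have hTR : ⟪T (R x), x⟫_ℂ = ‖A x‖ ^ 2 := by
    rw [← mul_apply_eq_comp, ← hAR, star_eq_adjoint, mul_apply_eq_comp, adjoint_inner_left,
      inner_self_eq_norm_sq_to_K]
    rfl
  have hTRR : (⟪T (R x), R x⟫_ℂ).re ≤ ‖B‖ * ‖A x‖ ^ 2 := by
    rw [← mul_apply_eq_comp, ← hAR, star_eq_adjoint, mul_apply_eq_comp, adjoint_inner_left,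
      ← mul_apply_eq_comp, hRB]
    calc (⟪A x, (B * A) x⟫_ℂ).re ≤ ‖A x‖ * ‖B (A x)‖ := re_inner_le_norm (𝕜 := ℂ) _ _
      _ ≤ ‖A x‖ * (‖B‖ * ‖A x‖) := by gcongr; exact B.le_opNorm _
      _ = ‖B‖ * ‖A x‖ ^ 2 := by ring
  have hCS := hT.norm_inner_sq_le (R x) x
  rw [hTR, ← Complex.ofReal_pow, Complex.norm_real, Real.norm_of_nonneg (by positivity)] at hCS
  have hTx := hT.re_inner_nonneg_left x
  rcases (sq_nonneg ‖A x‖).eq_or_lt with hA | hA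
  · rw [← hA]; exact mul_nonneg (norm_nonneg B) hTx
  · refine le_of_mul_le_mul_left ?_ hA
    calc ‖A x‖ ^ 2 * ‖A x‖ ^ 2 = (‖A x‖ ^ 2) ^ 2 := (sq _).symm
      _ ≤ (⟪T (R x), R x⟫_ℂ).re * (⟪T x, x⟫_ℂ).re := hCS
      _ ≤ ‖B‖ * ‖A x‖ ^ 2 * (⟪T x, x⟫_ℂ).re := by gcongr
      _ = ‖A x‖ ^ 2 * (‖B‖ * (⟪T x, x⟫_ℂ).re) := by ring

theorem ContinuousLinearMap.norm_le_one_of_mul_self_eq_one [CompleteSpace H] {J : H →L[ℂ] H}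
    (hJ : IsSelfAdjoint J) (hJJ : J * J = 1) : ‖J‖ ≤ 1 := by
  have h : ‖J‖ * ‖J‖ ≤ 1 := by
    rw [← CStarRing.norm_star_mul_self, hJ.star_eq, hJJ]; exact norm_id_le
  nlinarith [norm_nonneg J]

theorem ContinuousLinearMap.isPositive_mul_of_star_eq [CompleteSpace H] {J J₀ : H →L[ℂ] H}
    (hJ : IsSelfAdjoint J) (hJJ : J * J = 1) (hJ₀adj : star J₀ = J * J₀ * J)
    (hpos : ∀ f, 0 ≤ (⟪J (J₀ f), f⟫_ℂ).re) :
    (J * J₀).IsPositive := by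
  refine (isPositive_def' (T := J * J₀)).mpr ⟨?_, hpos⟩
  rw [IsSelfAdjoint, star_mul, hJ₀adj, hJ.star_eq, mul_assoc, hJJ, mul_one]

noncomputable def involutionProj (J₀ : H →L[ℂ] H) : H →L[ℂ] H := (2 : ℂ)⁻¹ • (1 + J₀)

variable {J J₀ : H →L[ℂ] H}

theorem involutionProj_mul_self_right (hJ₀ : J₀ * J₀ = 1) :
    involutionProj J₀ * J₀ = involutionProj J₀ := by
  rw [involutionProj, smul_mul_assoc, add_mul, one_mul, hJ₀, add_comm]

theorem involutionProj_mul_self (hJ₀ : J₀ * J₀ = 1) :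
    involutionProj J₀ * involutionProj J₀ = involutionProj J₀ := by
  nth_rewrite 2 [involutionProj]
  rw [mul_smul_comm, mul_add, mul_one, involutionProj_mul_self_right hJ₀, ← two_smul ℂ, smul_smul,
    inv_mul_cancel₀ two_ne_zero, one_smul]

theorem star_involutionProj [CompleteSpace H] (hJJ : J * J = 1)
    (hJ₀adj : star J₀ = J * J₀ * J) : star (involutionProj J₀) = J * involutionProj J₀ * J := by
  simp [involutionProj, hJ₀adj, mul_add, add_mul, hJJ]

theorem norm_involutionProj_le : ‖involutionProj J₀‖ ≤ (1 + ‖J₀‖) / 2 := by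
  rw [involutionProj, norm_smul]
  calc ‖(2 : ℂ)⁻¹‖ * ‖1 + J₀‖ ≤ 2⁻¹ * (1 + ‖J₀‖) := by
        norm_num; exact (norm_add_le _ _).trans (by gcongr; exact norm_id_le)
    _ = (1 + ‖J₀‖) / 2 := by ring

theorem re_inner_mul_involutionProj_le [CompleteSpace H] (hJ : IsSelfAdjoint J) (hJJ : J * J = 1)
    (hJ₀J₀ : J₀ * J₀ = 1) (hJ₀adj : star J₀ = J * J₀ * J) (f : H) :
    (⟪(J * J₀) (involutionProj J₀ f), involutionProj J₀ f⟫_ℂ).re ≤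
      ‖involutionProj J₀‖ * ‖f‖ ^ 2 := by
  have hconj :
      star (involutionProj J₀) * (J * J₀) * involutionProj J₀ = J * involutionProj J₀ := by
    rw [star_involutionProj hJJ hJ₀adj]
    simp only [mul_assoc]
    rw [← mul_assoc J J, hJJ, one_mul, ← mul_assoc _ J₀, involutionProj_mul_self_right hJ₀J₀,
      involutionProj_mul_self hJ₀J₀]
  rw [← adjoint_inner_left, ← star_eq_adjoint, ← mul_apply_eq_comp, ← mul_apply_eq_comp, hconj]
  calc (⟪(J * involutionProj J₀) f, f⟫_ℂ).re ≤ ‖(J * involutionProj J₀) f‖ * ‖f‖ :=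
        re_inner_le_norm (𝕜 := ℂ) _ _
    _ ≤ ‖J‖ * ‖involutionProj J₀‖ * ‖f‖ * ‖f‖ := by
        gcongr
        exact ((J * involutionProj J₀).le_opNorm f).trans (by gcongr; exact norm_mul_le _ _)
    _ ≤ 1 * ‖involutionProj J₀‖ * ‖f‖ * ‖f‖ := by
        gcongr; exact norm_le_one_of_mul_self_eq_one hJ hJJ
    _ = ‖involutionProj J₀‖ * ‖f‖ ^ 2 := by ring

theorem norm_involutionProj_apply_sq_le [CompleteSpace H] (hJ : IsSelfAdjoint J)
    (hJJ : J * J = 1) (hJ₀J₀ : J₀ * J₀ = 1) (hJ₀adj : star J₀ = J * J₀ * J)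
    (hT : (J * J₀).IsPositive) (f : H) :
    ‖involutionProj J₀ f‖ ^ 2 ≤ ‖involutionProj J₀‖ * (⟪(J * J₀) f, f⟫_ℂ).re := by
  set E := involutionProj J₀ with hE
  have hEJ₀ : E * J₀ = E := involutionProj_mul_self_right hJ₀J₀
  have hEE : E * E = E := involutionProj_mul_self hJ₀J₀
  have hAR : star E * E = J * J₀ * (J₀ * E * J * E) := by
    rw [hE, star_involutionProj hJJ hJ₀adj, ← hE]
    simp only [mul_assoc]
    rw [← mul_assoc J₀ J₀, hJ₀J₀, one_mul]
  have hRB : E * (J₀ * E * J * E) = E * J * E := by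
    simp only [← mul_assoc]
    rw [hEJ₀, hEE]
  have hEJ : ‖E * J‖ ≤ ‖E‖ :=
    (norm_mul_le _ _).trans (mul_le_of_le_one_right (norm_nonneg _)
      (norm_le_one_of_mul_self_eq_one hJ hJJ))
  exact (norm_apply_sq_le_of_star_mul_self_eq hT hAR hRB f).trans
    (mul_le_mul_of_nonneg_right hEJ (hT.re_inner_nonneg_left f))

theorem re_inner_involutionProj_le_and_norm_sq_le [CompleteSpace H] (hJ : IsSelfAdjoint J)
    (hJJ : J * J = 1) (hJ₀J₀ : J₀ * J₀ = 1) (hJ₀adj : star J₀ = J * J₀ * J)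
    (hT : (J * J₀).IsPositive) (f : H) :
    (⟪(J * J₀) (involutionProj J₀ f), involutionProj J₀ f⟫_ℂ).re ≤ (1 + ‖J₀‖) / 2 * ‖f‖ ^ 2 ∧
      ‖involutionProj J₀ f‖ ^ 2 ≤ (1 + ‖J₀‖) / 2 * (⟪(J * J₀) f, f⟫_ℂ).re :=
  ⟨(re_inner_mul_involutionProj_le hJ hJJ hJ₀J₀ hJ₀adj f).trans
      (mul_le_mul_of_nonneg_right norm_involutionProj_le (sq_nonneg _)),
    (norm_involutionProj_apply_sq_le hJ hJJ hJ₀J₀ hJ₀adj hT f).trans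
      (mul_le_mul_of_nonneg_right norm_involutionProj_le (hT.re_inner_nonneg_left f))⟩

end

theorem stmt16_general {H : Type*} [NormedAddCommGroup H] [InnerProductSpace ℂ H] [CompleteSpace H]
    (J J0 : H →L[ℂ] H)
    (hJsa : IsSelfAdjoint J) (hJinv : J ∘L J = ContinuousLinearMap.id ℂ H)
    (hJ0inv : J0 ∘L J0 = ContinuousLinearMap.id ℂ H)
    (hJ0adj : ContinuousLinearMap.adjoint J0 = J ∘L J0 ∘L J)
    (hpos : ∀ f : H, 0 ≤ (inner ℂ (J (J0 f)) f : ℂ).re)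
    (Ep Em : H →L[ℂ] H)
    (hEp : Ep = (2 : ℂ)⁻¹ • (ContinuousLinearMap.id ℂ H + J0))
    (hEm : Em = (2 : ℂ)⁻¹ • (ContinuousLinearMap.id ℂ H - J0)) :
    ∀ f : H,
      (inner ℂ (J (J0 (Ep f))) (Ep f) : ℂ).re ≤ (1 + ‖J0‖) / 2 * ‖f‖ ^ 2 ∧
      (inner ℂ (J (J0 (Em f))) (Em f) : ℂ).re ≤ (1 + ‖J0‖) / 2 * ‖f‖ ^ 2 ∧
      ‖Ep f‖ ^ 2 ≤ (1 + ‖J0‖) / 2 * (inner ℂ (J (J0 f)) f : ℂ).re ∧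
      ‖Em f‖ ^ 2 ≤ (1 + ‖J0‖) / 2 * (inner ℂ (J (J0 f)) f : ℂ).re := by
  have hJJ : J * J = 1 := hJinv
  have hJ0J0 : J0 * J0 = 1 := hJ0inv
  have hstar : star J0 = J * J0 * J := by rw [star_eq_adjoint, hJ0adj, mul_assoc]; rfl
  have hT : (J * J0).IsPositive := isPositive_mul_of_star_eq hJsa hJJ hstar hpos
  have hEp' : Ep = involutionProj J0 := hEp
  have hEm' : Em = involutionProj (-J0) := by rw [hEm, involutionProj, ← sub_eq_add_neg]; rfl
  intro f
  obtain ⟨hp₁, hp₂⟩ := re_inner_involutionProj_le_and_norm_sq_le hJsa hJJ hJ0J0 hstar hT f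
  obtain ⟨hm₁, hm₂⟩ := re_inner_involutionProj_le_and_norm_sq_le hJsa.neg (by rwa [neg_mul_neg])
    (by rwa [neg_mul_neg]) (by simp [hstar]) (by rwa [neg_mul_neg]) f
  rw [neg_mul_neg, norm_neg] at hm₁ hm₂
  subst hEp' hEm'
  exact ⟨hp₁, hm₁, hp₂, hm₂⟩

/-- **Lemma 5.1, second part.** Let `J`, `J₀` be bounded operators on the Hilbert space `H`
with `J = J* = J⁻¹`, `J₀² = I`, `J₀* = J J₀ J` and `⟨J J₀ f, f⟩ ≥ 0` for all `f`.  With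
`τ₀ = ‖J₀‖`, `‖f‖₀² = ⟨J J₀ f, f⟩` and `E_± = (I ± J₀)/2`, one has
`‖E_± f‖₀² ≤ ((1 + τ₀)/2) ‖f‖²` and `‖E_± f‖² ≤ ((1 + τ₀)/2) ‖f‖₀²` for every `f`. -/
theorem stmt16 {H : Type*} [NormedAddCommGroup H] [InnerProductSpace ℂ H] [CompleteSpace H]
    (J J0 : H →L[ℂ] H)
    (hJsa : IsSelfAdjoint J) (hJinv : J ∘L J = ContinuousLinearMap.id ℂ H)
    (hJ0inv : J0 ∘L J0 = ContinuousLinearMap.id ℂ H)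
    (hJ0adj : ContinuousLinearMap.adjoint J0 = J ∘L J0 ∘L J)
    (hreal : ∀ f : H, (inner ℂ (J (J0 f)) f : ℂ).im = 0)
    (hpos : ∀ f : H, 0 ≤ (inner ℂ (J (J0 f)) f : ℂ).re)
    (Ep Em : H →L[ℂ] H)
    (hEp : Ep = (2 : ℂ)⁻¹ • (ContinuousLinearMap.id ℂ H + J0))
    (hEm : Em = (2 : ℂ)⁻¹ • (ContinuousLinearMap.id ℂ H - J0)) :
    ∀ f : H,
      (inner ℂ (J (J0 (Ep f))) (Ep f) : ℂ).re ≤ (1 + ‖J0‖) / 2 * ‖f‖ ^ 2 ∧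
      (inner ℂ (J (J0 (Em f))) (Em f) : ℂ).re ≤ (1 + ‖J0‖) / 2 * ‖f‖ ^ 2 ∧
      ‖Ep f‖ ^ 2 ≤ (1 + ‖J0‖) / 2 * (inner ℂ (J (J0 f)) f : ℂ).re ∧
      ‖Em f‖ ^ 2 ≤ (1 + ‖J0‖) / 2 * (inner ℂ (J (J0 f)) f : ℂ).re :=
  stmt16_general J J0 hJsa hJinv hJ0inv hJ0adj hpos Ep Em hEp hEm
end

section
/- Let f₁, f₂ : (0, ∞) → ℂ be square-integrable. Then the function (x, y) ↦ (Re(conj(f₁(x))·f₁(y)) + Re(conj(f₂(x))·f₂(y)))/(x + y) − (2(x + y)/(x² + y²))·Re(conj(f₁(x))·f₂(y)) is integrable on (0, ∞) × (0, ∞), and ∫₀^∞∫₀^∞ [ (Re(conj(f₁(x))f₁(y)) + Re(conj(f₂(x))f₂(y)))/(x + y) − (2(x + y)/(x² + y²))·Re(conj(f₁(x))f₂(y)) ] dx dy ≤ π·(‖f₁‖₂² + 2√2·‖f₁‖₂·‖f₂‖₂ + ‖f₂‖₂²) ≤ π·(1 + √2)·(‖f₁‖₂² + ‖f₂‖₂²).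 -/
/-!
Bounding each real part by the product of the moduli, the integrand is dominated by
`(x + y)⁻¹ (|f₁ x| |f₁ y| + |f₂ x| |f₂ y|) + 2 (x + y) / (x² + y²) |f₁ x| |f₂ y|`.
Each term is controlled by Schur's test with test function `x ^ (-1/2)`: if `K ≥ 0` is symmetric
and `∫₀^∞ √(x / y) K(x, y) dy = C` for every `x > 0`, the weighted AM-GM inequality
`g x h y ≤ (ε √(x / y) g x ² + ε⁻¹ √(y / x) h y ²) / 2` integrates to
`∫∫ K g h ≤ C / 2 (ε ‖g‖² + ε⁻¹ ‖h‖²)`, and optimising in `ε` gives `C ‖g‖ ‖h‖`.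
For a kernel `K(x, y) = k(y / x) / x` the substitution `y = x u²` turns the weight integral into
`∫₀^∞ 2 k(u²) du`, which explicit arctangent antiderivatives evaluate to `π` for `(x + y)⁻¹` and to
`2√2 π` for `2 (x + y) / (x² + y²)`. The last inequality is `2√2 a b ≤ √2 (a² + b²)`.
-/

open MeasureTheory Set Filter Real Topology Function

local notation "μ₊" => volume.restrict (Ioi (0:ℝ))

theorem mul_le_div_two_mul_sq_add_inv_mul_sq {w : ℝ} (hw : 0 < w) (a b : ℝ) :
    a * b ≤ (w * a ^ 2 + w⁻¹ * b ^ 2) / 2 := by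
  have h : 0 ≤ w⁻¹ * (w * a - b) ^ 2 := by positivity
  have : w⁻¹ * (w * a - b) ^ 2 = w * a ^ 2 + w⁻¹ * b ^ 2 - 2 * (a * b) := by
    field_simp
    ring
  linarith

theorem le_mul_mul_of_forall_le_mul_add {X C a b : ℝ} (hC : 0 ≤ C) (ha : 0 ≤ a) (hb : 0 ≤ b)
    (H : ∀ ε > 0, X ≤ C / 2 * (ε * a ^ 2 + ε⁻¹ * b ^ 2)) : X ≤ C * a * b := by
  -- `ε = (b + δ) / (a + δ)` gives `X ≤ C * (a * b + δ * (a + b) / 2)`; let `δ → 0`.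
  have hδ : ∀ δ > 0, X ≤ C * (a * b + δ * (a + b) / 2) := fun δ hδ => by
    have h₁ : (b + δ) / (a + δ) * a ^ 2 ≤ (b + δ) * a := by
      rw [div_mul_eq_mul_div, div_le_iff₀ (by positivity)]
      nlinarith [show 0 ≤ (b + δ) * a * δ by positivity]
    have h₂ : (a + δ) / (b + δ) * b ^ 2 ≤ (a + δ) * b := by
      rw [div_mul_eq_mul_div, div_le_iff₀ (by positivity)]
      nlinarith [show 0 ≤ (a + δ) * b * δ by positivity]
    calc X ≤ C / 2 * ((b + δ) / (a + δ) * a ^ 2 + ((b + δ) / (a + δ))⁻¹ * b ^ 2) :=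
          H _ (by positivity)
      _ ≤ C / 2 * ((b + δ) * a + (a + δ) * b) := by rw [inv_div]; gcongr
      _ = C * (a * b + δ * (a + b) / 2) := by ring
  have hlim : Tendsto (fun δ => C * (a * b + δ * (a + b) / 2)) (𝓝[>] 0) (𝓝 (C * a * b)) := by
    have : Continuous fun δ : ℝ => C * (a * b + δ * (a + b) / 2) := by fun_prop
    simpa [mul_assoc] using (this.tendsto 0).mono_left nhdsWithin_le_nhds
  exact ge_of_tendsto hlim (eventually_nhdsWithin_of_forall hδ)

theorem sq_add_two_mul_sqrt_two_mul_add_sq_le (a b : ℝ) :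
    a ^ 2 + 2 * √2 * a * b + b ^ 2 ≤ (1 + √2) * (a ^ 2 + b ^ 2) := by
  nlinarith [mul_nonneg (sqrt_nonneg 2) (sq_nonneg (a - b))]

theorem sqrt_integral_sq_sq {α : Type*} [MeasurableSpace α] (μ : Measure α) (g : α → ℝ) :
    √(∫ x, g x ^ 2 ∂μ) ^ 2 = ∫ x, g x ^ 2 ∂μ :=
  sq_sqrt (integral_nonneg fun _ => sq_nonneg _)

theorem ae_pos_prod_restrict_Ioi : ∀ᵐ z : ℝ × ℝ ∂(μ₊.prod μ₊), 0 < z.1 ∧ 0 < z.2 := by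
  rw [Measure.prod_restrict]
  exact ae_restrict_mem (measurableSet_Ioi.prod measurableSet_Ioi)

-- The hypotheses of Schur's test on `L²(0, ∞)` with test function `x ^ (-1/2)` and bound `C`.
structure IsSchurKernel (K : ℝ → ℝ → ℝ) (C : ℝ) : Prop where
  measurable : Measurable (uncurry K)
  nonneg : ∀ x y, 0 < x → 0 < y → 0 ≤ K x y
  symm : ∀ x y, K x y = K y x
  integrableOn_weight : ∀ x, 0 < x → IntegrableOn (fun y => √(x / y) * K x y) (Ioi 0)
  integral_weight : ∀ x, 0 < x → ∫ y in Ioi 0, √(x / y) * K x y = C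

namespace IsSchurKernel

variable {K : ℝ → ℝ → ℝ} {C : ℝ}

theorem nonneg_const (hK : IsSchurKernel K C) : 0 ≤ C :=
  hK.integral_weight 1 one_pos ▸ setIntegral_nonneg measurableSet_Ioi fun y (hy : 0 < y) =>
    mul_nonneg (sqrt_nonneg _) (hK.nonneg 1 y one_pos hy)

theorem aestronglyMeasurable_weight (hK : IsSchurKernel K C) (μ : Measure (ℝ × ℝ)) :
    AEStronglyMeasurable (fun z : ℝ × ℝ => √(z.1 / z.2) * K z.1 z.2) μ :=
  ((measurable_fst.div measurable_snd).sqrt.mul hK.measurable).aestronglyMeasurable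

theorem integrable_mul_weight (hK : IsSchurKernel K C) {G : ℝ → ℝ} (hG : Integrable G μ₊) :
    Integrable (fun z : ℝ × ℝ => G z.1 * (√(z.1 / z.2) * K z.1 z.2)) (μ₊.prod μ₊) := by
  refine (integrable_prod_iff (hG.1.comp_fst.mul (hK.aestronglyMeasurable_weight _))).2
    ⟨?_, (hG.norm.mul_const C).congr ?_⟩
  · filter_upwards [ae_restrict_mem measurableSet_Ioi] with x hx
    exact (hK.integrableOn_weight x hx).const_mul (G x)
  · filter_upwards [ae_restrict_mem measurableSet_Ioi] with x hx
    have hW : ∫ y in Ioi 0, ‖√(x / y) * K x y‖ = C := by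
      rw [← hK.integral_weight x hx]
      refine setIntegral_congr_fun measurableSet_Ioi fun y (hy : 0 < y) => ?_
      exact norm_of_nonneg (mul_nonneg (sqrt_nonneg _) (hK.nonneg x y hx hy))
    simp only [Pi.mul_apply, norm_mul (G x), integral_const_mul, hW]

theorem integral_mul_weight (hK : IsSchurKernel K C) {G : ℝ → ℝ} (hG : Integrable G μ₊) :
    ∫ z, G z.1 * (√(z.1 / z.2) * K z.1 z.2) ∂(μ₊.prod μ₊) = C * ∫ x in Ioi 0, G x := by
  rw [integral_prod _ (hK.integrable_mul_weight hG), ← integral_const_mul]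
  refine setIntegral_congr_fun measurableSet_Ioi fun x (hx : 0 < x) => ?_
  dsimp only
  rw [integral_const_mul, hK.integral_weight x hx, mul_comm]

theorem integrable_mul_weight_swap (hK : IsSchurKernel K C) {G : ℝ → ℝ} (hG : Integrable G μ₊) :
    Integrable (fun z : ℝ × ℝ => G z.2 * (√(z.2 / z.1) * K z.2 z.1)) (μ₊.prod μ₊) :=
  (hK.integrable_mul_weight hG).swap

theorem norm_mul_mul_le (hK : IsSchurKernel K C) {x y ε : ℝ} (hx : 0 < x) (hy : 0 < y)
    (hε : 0 < ε) (g h : ℝ → ℝ) :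
    ‖K x y * (g x * h y)‖ ≤ ε / 2 * (g x ^ 2 * (√(x / y) * K x y)) +
      ε⁻¹ / 2 * (h y ^ 2 * (√(y / x) * K y x)) := by
  have hw : (ε * √(x / y))⁻¹ = ε⁻¹ * √(y / x) := by rw [mul_inv, ← sqrt_inv, inv_div]
  have hamgm := mul_le_div_two_mul_sq_add_inv_mul_sq
    (mul_pos hε (sqrt_pos.2 (div_pos hx hy))) |g x| |h y|
  rw [hw, sq_abs, sq_abs] at hamgm
  rw [norm_mul, norm_mul, norm_of_nonneg (hK.nonneg x y hx hy), norm_eq_abs, norm_eq_abs,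
    hK.symm y x]
  calc K x y * (|g x| * |h y|)
      ≤ K x y * ((ε * √(x / y) * g x ^ 2 + ε⁻¹ * √(y / x) * h y ^ 2) / 2) :=
        mul_le_mul_of_nonneg_left hamgm (hK.nonneg x y hx hy)
    _ = _ := by ring

theorem integrable_and_integral_schur_majorant (hK : IsSchurKernel K C) {g h : ℝ → ℝ}
    (hg : MemLp g 2 μ₊) (hh : MemLp h 2 μ₊) (ε : ℝ) :
    Integrable (fun z : ℝ × ℝ => ε / 2 * (g z.1 ^ 2 * (√(z.1 / z.2) * K z.1 z.2)) +
      ε⁻¹ / 2 * (h z.2 ^ 2 * (√(z.2 / z.1) * K z.2 z.1))) (μ₊.prod μ₊) ∧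
    ∫ z, (ε / 2 * (g z.1 ^ 2 * (√(z.1 / z.2) * K z.1 z.2)) +
      ε⁻¹ / 2 * (h z.2 ^ 2 * (√(z.2 / z.1) * K z.2 z.1))) ∂(μ₊.prod μ₊) =
      C / 2 * ((ε * ∫ x in Ioi 0, g x ^ 2) + ε⁻¹ * ∫ x in Ioi 0, h x ^ 2) := by
  have h₁ := (hK.integrable_mul_weight hg.integrable_sq).const_mul (ε / 2)
  have h₂ := (hK.integrable_mul_weight_swap hh.integrable_sq).const_mul (ε⁻¹ / 2)
  have hswap : ∫ z, h z.2 ^ 2 * (√(z.2 / z.1) * K z.2 z.1) ∂(μ₊.prod μ₊) =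
      ∫ z, h z.1 ^ 2 * (√(z.1 / z.2) * K z.1 z.2) ∂(μ₊.prod μ₊) :=
    integral_prod_swap fun z : ℝ × ℝ => h z.1 ^ 2 * (√(z.1 / z.2) * K z.1 z.2)
  refine ⟨h₁.add h₂, ?_⟩
  rw [integral_add h₁ h₂, integral_const_mul, integral_const_mul, hswap,
    hK.integral_mul_weight hg.integrable_sq, hK.integral_mul_weight hh.integrable_sq]
  ring

theorem integrable_mul_mul_and_integral_le (hK : IsSchurKernel K C) {g h : ℝ → ℝ}
    (hg : MemLp g 2 μ₊) (hh : MemLp h 2 μ₊) :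
    Integrable (fun z : ℝ × ℝ => K z.1 z.2 * (g z.1 * h z.2)) (μ₊.prod μ₊) ∧
      ∫ z, K z.1 z.2 * (g z.1 * h z.2) ∂(μ₊.prod μ₊) ≤
        C * √(∫ x in Ioi 0, g x ^ 2) * √(∫ x in Ioi 0, h x ^ 2) := by
  have hmeas : AEStronglyMeasurable (fun z : ℝ × ℝ => K z.1 z.2 * (g z.1 * h z.2)) (μ₊.prod μ₊) :=
    hK.measurable.aestronglyMeasurable.mul (hg.1.comp_fst.mul hh.1.comp_snd)
  have hle : ∀ ε > 0, ∀ᵐ z ∂(μ₊.prod μ₊), ‖K z.1 z.2 * (g z.1 * h z.2)‖ ≤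
      ε / 2 * (g z.1 ^ 2 * (√(z.1 / z.2) * K z.1 z.2)) +
        ε⁻¹ / 2 * (h z.2 ^ 2 * (√(z.2 / z.1) * K z.2 z.1)) := fun ε hε => by
    filter_upwards [ae_pos_prod_restrict_Ioi] with z hz
    exact hK.norm_mul_mul_le hz.1 hz.2 hε g h
  have hint := (hK.integrable_and_integral_schur_majorant hg hh 1).1.mono' hmeas (hle 1 one_pos)
  refine ⟨hint, ?_⟩
  refine le_mul_mul_of_forall_le_mul_add hK.nonneg_const (sqrt_nonneg _) (sqrt_nonneg _)
    fun ε hε => ?_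
  rw [sqrt_integral_sq_sq, sqrt_integral_sq_sq, ← (hK.integrable_and_integral_schur_majorant hg hh ε).2]
  exact integral_mono_ae hint (hK.integrable_and_integral_schur_majorant hg hh ε).1
    ((hle ε hε).mono fun z hz => (le_norm_self _).trans hz)

end IsSchurKernel

section Homogeneous

variable (k : ℝ → ℝ) {x : ℝ}

theorem image_mul_sq_Ioi (hx : 0 < x) : (fun u => x * u ^ 2) '' Ioi 0 = Ioi 0 := by
  refine (MapsTo.image_subset fun u (hu : 0 < u) => show 0 < x * u ^ 2 by positivity).antisymm
    fun y (hy : 0 < y) => ?_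
  refine ⟨√(y / x), sqrt_pos.2 (div_pos hy hx), ?_⟩
  dsimp only
  rw [sq_sqrt (div_pos hy hx).le]
  field_simp

theorem hasDerivWithinAt_mul_sq (u : ℝ) :
    HasDerivWithinAt (fun u => x * u ^ 2) (2 * x * u) (Ioi 0) u :=
  ((hasDerivAt_pow 2 u).const_mul x).hasDerivWithinAt.congr_deriv (by ring)

theorem injOn_mul_sq_Ioi (hx : 0 < x) : InjOn (fun u => x * u ^ 2) (Ioi 0) := fun _ hu _ hv huv =>
  (pow_left_inj₀ (le_of_lt hu) (le_of_lt hv) two_ne_zero).1 (mul_left_cancel₀ hx.ne' huv)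

theorem eqOn_abs_deriv_smul_homogeneous (hx : 0 < x) :
    EqOn (fun u => |2 * x * u| • (√(x / (x * u ^ 2)) * (k (x * u ^ 2 / x) / x)))
      (fun u => 2 * k (u ^ 2)) (Ioi 0) := by
  intro u (hu : 0 < u)
  dsimp only
  rw [smul_eq_mul, abs_of_pos (by positivity), mul_div_cancel_left₀ _ hx.ne',
    div_mul_cancel_left₀ hx.ne', sqrt_inv, sqrt_sq hu.le]
  field_simp

theorem integrableOn_Ioi_sqrt_div_mul_homogeneous_iff (hx : 0 < x) :
    IntegrableOn (fun y => √(x / y) * (k (y / x) / x)) (Ioi 0) ↔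
      IntegrableOn (fun u => 2 * k (u ^ 2)) (Ioi 0) := by
  have h := integrableOn_image_iff_integrableOn_abs_deriv_smul measurableSet_Ioi
    (fun u _ => hasDerivWithinAt_mul_sq u) (injOn_mul_sq_Ioi hx) fun y => √(x / y) * (k (y / x) / x)
  rw [image_mul_sq_Ioi hx] at h
  exact h.trans (integrableOn_congr_fun (eqOn_abs_deriv_smul_homogeneous k hx) measurableSet_Ioi)

theorem integral_Ioi_sqrt_div_mul_homogeneous (hx : 0 < x) :
    ∫ y in Ioi 0, √(x / y) * (k (y / x) / x) = ∫ u in Ioi 0, 2 * k (u ^ 2) := by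
  have h := integral_image_eq_integral_abs_deriv_smul measurableSet_Ioi
    (fun u _ => hasDerivWithinAt_mul_sq u) (injOn_mul_sq_Ioi hx) fun y => √(x / y) * (k (y / x) / x)
  rw [image_mul_sq_Ioi hx] at h
  exact h.trans (setIntegral_congr_fun measurableSet_Ioi (eqOn_abs_deriv_smul_homogeneous k hx))

end Homogeneous

theorem IsSchurKernel.of_homogeneous {K : ℝ → ℝ → ℝ} (k : ℝ → ℝ) {C : ℝ}
    (hKm : Measurable (uncurry K)) (hKsymm : ∀ x y, K x y = K y x)
    (hKk : ∀ x y, 0 < x → 0 < y → K x y = k (y / x) / x) (hk : ∀ t, 0 < t → 0 ≤ k t)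
    (hki : IntegrableOn (fun u => 2 * k (u ^ 2)) (Ioi 0))
    (hkC : ∫ u in Ioi 0, 2 * k (u ^ 2) = C) : IsSchurKernel K C := by
  have hW : ∀ x, 0 < x → EqOn (fun y => √(x / y) * (k (y / x) / x)) (fun y => √(x / y) * K x y)
      (Ioi 0) := fun x hx y (hy : 0 < y) => by simp only [hKk x y hx hy]
  refine ⟨hKm, fun x y hx hy => ?_, hKsymm, fun x hx => ?_, fun x hx => ?_⟩
  · rw [hKk x y hx hy]
    exact div_nonneg (hk _ (div_pos hy hx)) hx.le
  · exact (integrableOn_congr_fun (hW x hx) measurableSet_Ioi).1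
      ((integrableOn_Ioi_sqrt_div_mul_homogeneous_iff k hx).2 hki)
  · rw [← setIntegral_congr_fun measurableSet_Ioi (hW x hx),
      integral_Ioi_sqrt_div_mul_homogeneous k hx, hkC]

-- `u ^ 2 - √2 * u + 1` and `u ^ 2 + √2 * u + 1` are the real quadratic factors of `u ^ 4 + 1`.
theorem hasDerivAt_arctan_sqrt_two_mul_sub_add (u : ℝ) :
    HasDerivAt (fun u => (arctan (√2 * u - 1) + arctan (√2 * u + 1)) / √2)
      ((1 + u ^ 2) / (1 + u ^ 4)) u := by
  have hs : √2 ^ 2 = 2 := sq_sqrt zero_le_two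
  have hlin : HasDerivAt (fun u : ℝ => √2 * u) √2 u := by
    simpa using (hasDerivAt_id u).const_mul √2
  have h := (((hasDerivAt_arctan _).comp u (hlin.sub_const 1)).add
    ((hasDerivAt_arctan _).comp u (hlin.add_const 1))).div_const √2
  refine h.congr_deriv ?_
  have e₁ : 0 < 1 + (√2 * u - 1) ^ 2 := by positivity
  have e₂ : 0 < 1 + (√2 * u + 1) ^ 2 := by positivity
  have e₃ : 0 < 1 + u ^ 4 := by positivity
  field_simp
  linear_combination (2 * u ^ 2 - 2 * u ^ 4 - (u ^ 4 + u ^ 6) * √2 ^ 2) * hs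

theorem tendsto_arctan_sqrt_two_mul_sub_add :
    Tendsto (fun u => (arctan (√2 * u - 1) + arctan (√2 * u + 1)) / √2) atTop (𝓝 (π / √2)) := by
  have hlin : Tendsto (fun u : ℝ => √2 * u) atTop atTop :=
    tendsto_id.const_mul_atTop (by positivity)
  have harctan := tendsto_nhds_of_tendsto_nhdsWithin tendsto_arctan_atTop
  have h := ((harctan.comp (tendsto_atTop_add_const_right _ (-1) hlin)).add
    (harctan.comp (tendsto_atTop_add_const_right _ 1 hlin))).div_const √2
  convert h using 2 <;> simp [sub_eq_add_neg]

theorem integrableOn_Ioi_one_add_sq_div_one_add_pow_four :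
    IntegrableOn (fun u : ℝ => (1 + u ^ 2) / (1 + u ^ 4)) (Ioi 0) :=
  integrableOn_Ioi_deriv_of_nonneg
    (hasDerivAt_arctan_sqrt_two_mul_sub_add 0).continuousAt.continuousWithinAt
    (fun u _ => hasDerivAt_arctan_sqrt_two_mul_sub_add u) (fun u _ => by positivity)
    tendsto_arctan_sqrt_two_mul_sub_add

theorem integral_Ioi_one_add_sq_div_one_add_pow_four :
    ∫ u in Ioi (0 : ℝ), (1 + u ^ 2) / (1 + u ^ 4) = π / √2 := by
  rw [integral_Ioi_of_hasDerivAt_of_nonneg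
    (hasDerivAt_arctan_sqrt_two_mul_sub_add 0).continuousAt.continuousWithinAt
    (fun u _ => hasDerivAt_arctan_sqrt_two_mul_sub_add u) (fun u _ => by positivity)
    tendsto_arctan_sqrt_two_mul_sub_add]
  simp [arctan_neg]

theorem isSchurKernel_inv_add : IsSchurKernel (fun x y => (x + y)⁻¹) π := by
  refine .of_homogeneous (fun t => (1 + t)⁻¹) (by fun_prop) (fun x y => by rw [add_comm])
    (fun x y hx hy => by field_simp) (fun t ht => by positivity) ?_ ?_
  · exact integrable_inv_one_add_sq.integrableOn.const_mul 2
  · rw [integral_const_mul, integral_Ioi_inv_one_add_sq, arctan_zero]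
    ring

theorem isSchurKernel_two_mul_add_div_sq_add_sq :
    IsSchurKernel (fun x y => 2 * (x + y) / (x ^ 2 + y ^ 2)) (2 * √2 * π) := by
  have hk : ∀ u : ℝ, 2 * (2 * (1 + u ^ 2) / (1 + (u ^ 2) ^ 2)) =
      4 * ((1 + u ^ 2) / (1 + u ^ 4)) := fun u => by ring
  refine .of_homogeneous (fun t => 2 * (1 + t) / (1 + t ^ 2)) (by fun_prop)
    (fun x y => by ring) (fun x y hx hy => by field_simp) (fun t ht => by positivity) ?_ ?_
  · simp only [hk]
    exact integrableOn_Ioi_one_add_sq_div_one_add_pow_four.const_mul 4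
  · simp only [hk]
    rw [integral_const_mul, integral_Ioi_one_add_sq_div_one_add_pow_four]
    field_simp
    rw [sq_sqrt zero_le_two]
    ring

noncomputable def quadraticIntegrand (f₁ f₂ : ℝ → ℂ) (z : ℝ × ℝ) : ℝ :=
  ((starRingEnd ℂ (f₁ z.1) * f₁ z.2).re + (starRingEnd ℂ (f₂ z.1) * f₂ z.2).re) / (z.1 + z.2) -
    2 * (z.1 + z.2) / (z.1 ^ 2 + z.2 ^ 2) * (starRingEnd ℂ (f₁ z.1) * f₂ z.2).re

theorem abs_re_conj_mul_le (a b : ℂ) : |(starRingEnd ℂ a * b).re| ≤ ‖a‖ * ‖b‖ :=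
  (Complex.abs_re_le_norm _).trans_eq (by rw [norm_mul, Complex.norm_conj])

theorem norm_quadraticIntegrand_le (f₁ f₂ : ℝ → ℂ) {x y : ℝ} (hx : 0 < x) (hy : 0 < y) :
    ‖quadraticIntegrand f₁ f₂ (x, y)‖ ≤ (x + y)⁻¹ * (‖f₁ x‖ * ‖f₁ y‖) +
      (x + y)⁻¹ * (‖f₂ x‖ * ‖f₂ y‖) + 2 * (x + y) / (x ^ 2 + y ^ 2) * (‖f₁ x‖ * ‖f₂ y‖) := by
  have h₁₂ := (abs_add_le _ _).trans
    (add_le_add (abs_re_conj_mul_le (f₁ x) (f₁ y)) (abs_re_conj_mul_le (f₂ x) (f₂ y)))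
  have h₃ := abs_re_conj_mul_le (f₁ x) (f₂ y)
  have hc : 0 ≤ 2 * (x + y) / (x ^ 2 + y ^ 2) := by positivity
  dsimp only [quadraticIntegrand]
  rw [norm_eq_abs]
  refine (abs_sub _ _).trans ?_
  rw [abs_div, abs_mul, abs_of_pos (by positivity : 0 < x + y), abs_of_nonneg hc]
  calc _ ≤ (‖f₁ x‖ * ‖f₁ y‖ + ‖f₂ x‖ * ‖f₂ y‖) / (x + y) +
        2 * (x + y) / (x ^ 2 + y ^ 2) * (‖f₁ x‖ * ‖f₂ y‖) := by gcongr
    _ = _ := by ring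

theorem aemeasurable_quadraticIntegrand {f₁ f₂ : ℝ → ℂ} {μ : Measure ℝ} (h₁ : AEMeasurable f₁ μ)
    (h₂ : AEMeasurable f₂ μ) : AEMeasurable (quadraticIntegrand f₁ f₂) (μ.prod μ) := by
  have := h₁.comp_fst (ν := μ)
  have := h₁.comp_snd (μ := μ)
  have := h₂.comp_fst (ν := μ)
  have := h₂.comp_snd (μ := μ)
  unfold quadraticIntegrand
  fun_prop

theorem integrable_quadraticIntegrand_and_integral_le {f₁ f₂ : ℝ → ℂ} (h₁ : MemLp f₁ 2 μ₊)
    (h₂ : MemLp f₂ 2 μ₊) :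
    Integrable (quadraticIntegrand f₁ f₂) (μ₊.prod μ₊) ∧
      ∫ z, quadraticIntegrand f₁ f₂ z ∂(μ₊.prod μ₊) ≤
        π * (√(∫ x in Ioi 0, ‖f₁ x‖ ^ 2) ^ 2 +
          2 * √2 * √(∫ x in Ioi 0, ‖f₁ x‖ ^ 2) * √(∫ x in Ioi 0, ‖f₂ x‖ ^ 2) +
          √(∫ x in Ioi 0, ‖f₂ x‖ ^ 2) ^ 2) := by
  obtain ⟨hi₁, hb₁⟩ := isSchurKernel_inv_add.integrable_mul_mul_and_integral_le h₁.norm h₁.norm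
  obtain ⟨hi₂, hb₂⟩ := isSchurKernel_inv_add.integrable_mul_mul_and_integral_le h₂.norm h₂.norm
  obtain ⟨hi₃, hb₃⟩ :=
    isSchurKernel_two_mul_add_div_sq_add_sq.integrable_mul_mul_and_integral_le h₁.norm h₂.norm
  have hM := (hi₁.add hi₂).add hi₃
  have hdom : ∀ᵐ z ∂(μ₊.prod μ₊), ‖quadraticIntegrand f₁ f₂ z‖ ≤
      (z.1 + z.2)⁻¹ * (‖f₁ z.1‖ * ‖f₁ z.2‖) + (z.1 + z.2)⁻¹ * (‖f₂ z.1‖ * ‖f₂ z.2‖) +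
        2 * (z.1 + z.2) / (z.1 ^ 2 + z.2 ^ 2) * (‖f₁ z.1‖ * ‖f₂ z.2‖) := by
    filter_upwards [ae_pos_prod_restrict_Ioi] with z hz
    exact norm_quadraticIntegrand_le f₁ f₂ hz.1 hz.2
  have hmeas := aemeasurable_quadraticIntegrand h₁.1.aemeasurable h₂.1.aemeasurable
  refine ⟨hM.mono' hmeas.aestronglyMeasurable hdom, ?_⟩
  calc ∫ z, quadraticIntegrand f₁ f₂ z ∂(μ₊.prod μ₊)
      ≤ ‖∫ z, quadraticIntegrand f₁ f₂ z ∂(μ₊.prod μ₊)‖ := le_norm_self _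
    _ ≤ _ := norm_integral_le_of_norm_le hM hdom
    _ = _ := by rw [integral_add' (hi₁.add hi₂) hi₃, integral_add' hi₁ hi₂]
    _ ≤ _ := add_le_add (add_le_add hb₁ hb₂) hb₃
    _ = _ := by ring

/-- **The core estimate for `τ₀ ≤ 3 + 2√2` in Section 6.** For square-integrable
`f₁, f₂` on `(0, ∞)`, the kernel expression is integrable on `(0,∞) × (0,∞)` and its
integral is at most `π(‖f₁‖₂² + 2√2 ‖f₁‖₂ ‖f₂‖₂ + ‖f₂‖₂²) ≤ π(1+√2)(‖f₁‖₂² + ‖f₂‖₂²)`. -/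
theorem stmt19 (f₁ f₂ : ℝ → ℂ)
    (h1 : MemLp f₁ 2 (volume.restrict (Set.Ioi 0)))
    (h2 : MemLp f₂ 2 (volume.restrict (Set.Ioi 0))) :
    Integrable
      (fun z : ℝ × ℝ =>
        ((starRingEnd ℂ (f₁ z.1) * f₁ z.2).re + (starRingEnd ℂ (f₂ z.1) * f₂ z.2).re) /
            (z.1 + z.2) -
          2 * (z.1 + z.2) / (z.1 ^ 2 + z.2 ^ 2) * (starRingEnd ℂ (f₁ z.1) * f₂ z.2).re)
      ((volume.restrict (Set.Ioi 0)).prod (volume.restrict (Set.Ioi 0))) ∧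
    (∫ z : ℝ × ℝ,
        (((starRingEnd ℂ (f₁ z.1) * f₁ z.2).re + (starRingEnd ℂ (f₂ z.1) * f₂ z.2).re) /
            (z.1 + z.2) -
          2 * (z.1 + z.2) / (z.1 ^ 2 + z.2 ^ 2) * (starRingEnd ℂ (f₁ z.1) * f₂ z.2).re)
        ∂((volume.restrict (Set.Ioi 0)).prod (volume.restrict (Set.Ioi 0)))) ≤
      Real.pi * ((Real.sqrt (∫ x in Set.Ioi (0:ℝ), ‖f₁ x‖ ^ 2)) ^ 2 +
        2 * Real.sqrt 2 * Real.sqrt (∫ x in Set.Ioi (0:ℝ), ‖f₁ x‖ ^ 2) *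
          Real.sqrt (∫ x in Set.Ioi (0:ℝ), ‖f₂ x‖ ^ 2) +
        (Real.sqrt (∫ x in Set.Ioi (0:ℝ), ‖f₂ x‖ ^ 2)) ^ 2) ∧
    Real.pi * ((Real.sqrt (∫ x in Set.Ioi (0:ℝ), ‖f₁ x‖ ^ 2)) ^ 2 +
        2 * Real.sqrt 2 * Real.sqrt (∫ x in Set.Ioi (0:ℝ), ‖f₁ x‖ ^ 2) *
          Real.sqrt (∫ x in Set.Ioi (0:ℝ), ‖f₂ x‖ ^ 2) +
        (Real.sqrt (∫ x in Set.Ioi (0:ℝ), ‖f₂ x‖ ^ 2)) ^ 2) ≤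
      Real.pi * (1 + Real.sqrt 2) *
        ((∫ x in Set.Ioi (0:ℝ), ‖f₁ x‖ ^ 2) + ∫ x in Set.Ioi (0:ℝ), ‖f₂ x‖ ^ 2) := by
  obtain ⟨hint, hle⟩ := integrable_quadraticIntegrand_and_integral_le h1 h2
  refine ⟨hint, hle, ?_⟩
  calc _ ≤ π * ((1 + √2) * (√(∫ x in Ioi 0, ‖f₁ x‖ ^ 2) ^ 2 + √(∫ x in Ioi 0, ‖f₂ x‖ ^ 2) ^ 2)) :=
        mul_le_mul_of_nonneg_left (sq_add_two_mul_sqrt_two_mul_add_sq_le _ _) pi_pos.le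
    _ = _ := by rw [sqrt_integral_sq_sq, sqrt_integral_sq_sq, mul_assoc]
end
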